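/- arXiv:1912.02882 — 5 statements merged into one kernel-verified Lean document; each statement's English description precedes it below -/
import Mathlib

section
/- For any n×n complex matrix X and each j = 1,…,n, the j-th largest eigenvalue of the Hermitian part Re(X) = (X + X*)/2 satisfies λ_j(Re(X)) ≤ σ_j(X), the j-th largest singular value of X. -/
open Matrix
open scoped ComplexOrder

noncomputable def eigDesc {n : ℕ} {A : Matrix (Fin n) (Fin n) ℂ} (hA : A.IsHermitian)
    (j : Fin n) : ℝ :=
  (hA.eigenvalues ∘ Tuple.sort hA.eigenvalues) j.rev

noncomputable def singVal {n : ℕ} (A : Matrix (Fin n) (Fin n) ℂ) (j : Fin n) : ℝ :=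
  Real.sqrt (eigDesc ((Matrix.posSemidef_conjTranspose_mul_self A).isHermitian) j)

noncomputable def hermPart {n : ℕ} (X : Matrix (Fin n) (Fin n) ℂ) :
    Matrix (Fin n) (Fin n) ℂ :=
  (1/2 : ℂ) • (X + Xᴴ)

lemma hermPart_isHermitian {n : ℕ} (X : Matrix (Fin n) (Fin n) ℂ) :
    (hermPart X).IsHermitian := by
  unfold hermPart
  simp [Matrix.IsHermitian, Matrix.conjTranspose_smul, Matrix.conjTranspose_add, add_comm]

/-! Pick a nonzero `x` in the intersection of the span of the eigenvectors of `Re X` for its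
`j + 1` largest eigenvalues and the span of the eigenvectors of `Xᴴ X` for its `n - j` smallest
ones; the dimensions add up to `n + 1`. Then
`λ_j(Re X) ‖x‖² ≤ Re ⟪x, Re X x⟫ = Re ⟪x, X x⟫ ≤ ‖x‖ ‖X x‖ ≤ σ_j(X) ‖x‖²`. -/

open scoped InnerProductSpace

theorem Submodule.exists_mem_mem_ne_zero_of_finrank_lt_add {K V : Type*} [DivisionRing K]
    [AddCommGroup V] [Module K V] [FiniteDimensional K V] {s t : Submodule K V}
    (h : Module.finrank K V < Module.finrank K s + Module.finrank K t) :
    ∃ x ∈ s, x ∈ t ∧ x ≠ 0 := by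
  by_contra! hst
  exact h.not_ge (Submodule.finrank_add_finrank_le_of_disjoint (Submodule.disjoint_def.2 hst))

namespace Matrix.IsHermitian

variable {𝕜 ι : Type*} [RCLike 𝕜] [Fintype ι] [DecidableEq ι] {A : Matrix ι ι 𝕜}
  (hA : A.IsHermitian)

lemma toEuclideanLin_eigenvectorBasis (i : ι) :
    toEuclideanLin A (hA.eigenvectorBasis i) = (hA.eigenvalues i : 𝕜) • hA.eigenvectorBasis i := by
  apply WithLp.ofLp_injective
  change A *ᵥ (hA.eigenvectorBasis i).ofLp = (hA.eigenvalues i : 𝕜) • (hA.eigenvectorBasis i).ofLp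
  simpa only [WithLp.ofLp_smul, RCLike.real_smul_eq_coe_smul (K := 𝕜)] using
    hA.mulVec_eigenvectorBasis i

lemma re_inner_toEuclideanLin_eq_sum (x : EuclideanSpace 𝕜 ι) :
    RCLike.re ⟪x, toEuclideanLin A x⟫_𝕜
      = ∑ i, hA.eigenvalues i * ‖hA.eigenvectorBasis.repr x i‖ ^ 2 := by
  conv_lhs => rw [← hA.eigenvectorBasis.sum_repr x]
  simp only [map_sum, map_smul, hA.toEuclideanLin_eigenvectorBasis, smul_smul]
  rw [hA.eigenvectorBasis.orthonormal.inner_sum, map_sum]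
  refine Finset.sum_congr rfl fun i _ => ?_
  rw [← mul_assoc, RCLike.conj_mul, ← RCLike.ofReal_pow, ← RCLike.ofReal_mul, RCLike.ofReal_re,
    mul_comm]

lemma norm_sq_eq_sum_repr (x : EuclideanSpace 𝕜 ι) :
    ‖x‖ ^ 2 = ∑ i, ‖hA.eigenvectorBasis.repr x i‖ ^ 2 := by
  rw [← hA.eigenvectorBasis.repr.norm_map x, EuclideanSpace.norm_sq_eq]

lemma repr_eq_zero_of_mem_span {s : Set ι} {x : EuclideanSpace 𝕜 ι}
    (hx : x ∈ Submodule.span 𝕜 (hA.eigenvectorBasis '' s)) {i : ι} (hi : i ∉ s) :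
    hA.eigenvectorBasis.repr x i = 0 := by
  rw [← OrthonormalBasis.coe_toBasis, Module.Basis.mem_span_image] at hx
  rw [← OrthonormalBasis.coe_toBasis_repr_apply, ← Finsupp.notMem_support_iff]
  exact fun h => hi (hx h)

lemma finrank_span_eigenvectorBasis_image (s : Finset ι) :
    Module.finrank 𝕜 (Submodule.span 𝕜 (hA.eigenvectorBasis '' s)) = s.card := by
  rw [Set.image_eq_range]
  exact (finrank_span_eq_card
    (hA.eigenvectorBasis.orthonormal.linearIndependent.comp _ Subtype.val_injective)).trans
    (Fintype.card_coe s)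

lemma mul_norm_sq_le_re_inner_of_mem_span {s : Set ι} {c : ℝ}
    (hc : ∀ i ∈ s, c ≤ hA.eigenvalues i) {x : EuclideanSpace 𝕜 ι}
    (hx : x ∈ Submodule.span 𝕜 (hA.eigenvectorBasis '' s)) :
    c * ‖x‖ ^ 2 ≤ RCLike.re ⟪x, toEuclideanLin A x⟫_𝕜 := by
  rw [hA.re_inner_toEuclideanLin_eq_sum, hA.norm_sq_eq_sum_repr, Finset.mul_sum]
  refine Finset.sum_le_sum fun i _ => ?_
  by_cases hi : i ∈ s
  · exact mul_le_mul_of_nonneg_right (hc i hi) (sq_nonneg _)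
  · simp [hA.repr_eq_zero_of_mem_span hx hi]

lemma re_inner_le_mul_norm_sq_of_mem_span {s : Set ι} {c : ℝ}
    (hc : ∀ i ∈ s, hA.eigenvalues i ≤ c) {x : EuclideanSpace 𝕜 ι}
    (hx : x ∈ Submodule.span 𝕜 (hA.eigenvectorBasis '' s)) :
    RCLike.re ⟪x, toEuclideanLin A x⟫_𝕜 ≤ c * ‖x‖ ^ 2 := by
  rw [hA.re_inner_toEuclideanLin_eq_sum, hA.norm_sq_eq_sum_repr, Finset.mul_sum]
  refine Finset.sum_le_sum fun i _ => ?_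
  by_cases hi : i ∈ s
  · exact mul_le_mul_of_nonneg_right (hc i hi) (sq_nonneg _)
  · simp [hA.repr_eq_zero_of_mem_span hx hi]

end Matrix.IsHermitian

lemma Matrix.re_inner_toEuclideanLin_conjTranspose_mul_self {𝕜 m n : Type*} [RCLike 𝕜]
    [Fintype m] [DecidableEq m] [Fintype n] [DecidableEq n] (A : Matrix m n 𝕜)
    (x : EuclideanSpace 𝕜 n) :
    RCLike.re ⟪x, toEuclideanLin (Aᴴ * A) x⟫_𝕜 = ‖toEuclideanLin A x‖ ^ 2 := by
  have hmul : toEuclideanLin (Aᴴ * A) x = toEuclideanLin Aᴴ (toEuclideanLin A x) :=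
    WithLp.ofLp_injective _ (mulVec_mulVec _ _ _).symm
  rw [hmul, toEuclideanLin_conjTranspose_eq_adjoint, LinearMap.adjoint_inner_right,
    inner_self_eq_norm_sq]

section SortedEigenvalues

variable {n : ℕ} {A : Matrix (Fin n) (Fin n) ℂ} (hA : A.IsHermitian)

lemma exists_finset_card_eq_succ_eigDesc_le (j : Fin n) :
    ∃ s : Finset (Fin n), s.card = j + 1 ∧ ∀ i ∈ s, eigDesc hA j ≤ hA.eigenvalues i := by
  refine ⟨(Finset.Ici j.rev).map (Tuple.sort hA.eigenvalues).toEmbedding, ?_, ?_⟩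
  · rw [Finset.card_map, Fin.card_Ici, Fin.val_rev]
    omega
  · intro i hi
    obtain ⟨k, hk, rfl⟩ := Finset.mem_map.1 hi
    exact Tuple.monotone_sort hA.eigenvalues (Finset.mem_Ici.1 hk)

lemma exists_finset_card_eq_sub_le_eigDesc (j : Fin n) :
    ∃ s : Finset (Fin n), s.card = n - j ∧ ∀ i ∈ s, hA.eigenvalues i ≤ eigDesc hA j := by
  refine ⟨(Finset.Iic j.rev).map (Tuple.sort hA.eigenvalues).toEmbedding, ?_, ?_⟩
  · rw [Finset.card_map, Fin.card_Iic, Fin.val_rev]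
    omega
  · intro i hi
    obtain ⟨k, hk, rfl⟩ := Finset.mem_map.1 hi
    exact Tuple.monotone_sort hA.eigenvalues (Finset.mem_Iic.1 hk)

lemma exists_submodule_finrank_eq_succ_eigDesc_le (j : Fin n) :
    ∃ V : Submodule ℂ (EuclideanSpace ℂ (Fin n)), Module.finrank ℂ V = j + 1 ∧
      ∀ x ∈ V, eigDesc hA j * ‖x‖ ^ 2 ≤ RCLike.re ⟪x, toEuclideanLin A x⟫_ℂ := by
  obtain ⟨s, hs, hle⟩ := exists_finset_card_eq_succ_eigDesc_le hA j
  exact ⟨_, (hA.finrank_span_eigenvectorBasis_image s).trans hs,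
    fun x hx => hA.mul_norm_sq_le_re_inner_of_mem_span hle hx⟩

lemma exists_submodule_finrank_eq_sub_le_eigDesc (j : Fin n) :
    ∃ V : Submodule ℂ (EuclideanSpace ℂ (Fin n)), Module.finrank ℂ V = n - j ∧
      ∀ x ∈ V, RCLike.re ⟪x, toEuclideanLin A x⟫_ℂ ≤ eigDesc hA j * ‖x‖ ^ 2 := by
  obtain ⟨s, hs, hle⟩ := exists_finset_card_eq_sub_le_eigDesc hA j
  exact ⟨_, (hA.finrank_span_eigenvectorBasis_image s).trans hs,
    fun x hx => hA.re_inner_le_mul_norm_sq_of_mem_span hle hx⟩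

end SortedEigenvalues

lemma re_inner_toEuclideanLin_hermPart {n : ℕ} (X : Matrix (Fin n) (Fin n) ℂ)
    (x : EuclideanSpace ℂ (Fin n)) :
    RCLike.re ⟪x, toEuclideanLin (hermPart X) x⟫_ℂ = RCLike.re ⟪x, toEuclideanLin X x⟫_ℂ := by
  have hadj : ⟪x, toEuclideanLin Xᴴ x⟫_ℂ = starRingEnd ℂ ⟪x, toEuclideanLin X x⟫_ℂ := by
    rw [toEuclideanLin_conjTranspose_eq_adjoint, LinearMap.adjoint_inner_right, inner_conj_symm]
  rw [hermPart, map_smul, map_add, LinearMap.smul_apply, LinearMap.add_apply, inner_smul_right,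
    inner_add_right, hadj, RCLike.re_to_complex, RCLike.re_to_complex, Complex.add_conj]
  simp

lemma exists_submodule_finrank_eq_sub_norm_le_singVal {n : ℕ} (X : Matrix (Fin n) (Fin n) ℂ)
    (j : Fin n) :
    ∃ V : Submodule ℂ (EuclideanSpace ℂ (Fin n)), Module.finrank ℂ V = n - j ∧
      ∀ x ∈ V, ‖toEuclideanLin X x‖ ≤ singVal X j * ‖x‖ := by
  obtain ⟨V, hV, hle⟩ := exists_submodule_finrank_eq_sub_le_eigDesc
    (posSemidef_conjTranspose_mul_self X).isHermitian j
  refine ⟨V, hV, fun x hx => ?_⟩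
  have hsq := hle x hx
  rw [re_inner_toEuclideanLin_conjTranspose_mul_self] at hsq
  calc ‖toEuclideanLin X x‖ = √(‖toEuclideanLin X x‖ ^ 2) := (Real.sqrt_sq (norm_nonneg _)).symm
    _ ≤ √(eigDesc _ j * ‖x‖ ^ 2) := Real.sqrt_le_sqrt hsq
    _ = singVal X j * ‖x‖ := by
      rw [Real.sqrt_mul' _ (sq_nonneg _), Real.sqrt_sq (norm_nonneg _)]
      rfl

theorem stmt4 {n : ℕ} (X : Matrix (Fin n) (Fin n) ℂ) (j : Fin n) :
    eigDesc (hermPart_isHermitian X) j ≤ singVal X j := by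
  obtain ⟨V, hV, hVle⟩ := exists_submodule_finrank_eq_succ_eigDesc_le (hermPart_isHermitian X) j
  obtain ⟨W, hW, hWle⟩ := exists_submodule_finrank_eq_sub_norm_le_singVal X j
  obtain ⟨x, hxV, hxW, hx⟩ := Submodule.exists_mem_mem_ne_zero_of_finrank_lt_add (s := V) (t := W)
    (by rw [finrank_euclideanSpace_fin, hV, hW]; omega)
  have key : eigDesc (hermPart_isHermitian X) j * ‖x‖ ^ 2 ≤ singVal X j * ‖x‖ ^ 2 :=
    calc _ ≤ RCLike.re ⟪x, toEuclideanLin (hermPart X) x⟫_ℂ := hVle x hxV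
      _ = RCLike.re ⟪x, toEuclideanLin X x⟫_ℂ := re_inner_toEuclideanLin_hermPart X x
      _ ≤ ‖x‖ * ‖toEuclideanLin X x‖ := re_inner_le_norm _ _
      _ ≤ ‖x‖ * (singVal X j * ‖x‖) := by gcongr; exact hWle x hxW
      _ = singVal X j * ‖x‖ ^ 2 := by ring
  exact le_of_mul_le_mul_right key (by positivity)
end

section
/- Let A be an n×n strict contraction with singular values r_1 ≥ … ≥ r_n (all < 1). Then for each j = 1,…,n, the j-th largest eigenvalue of the positive definite matrix (I−A*)⁻¹(I−A*A)(I−A)⁻¹ is at most (1+r_j)/(1−r_j). -/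
/-!
Write `M = (1 - Aᴴ)⁻¹ (1 - Aᴴ A) (1 - A)⁻¹` and `r = r_j`. Since `‖A y‖ < ‖y‖` for `y ≠ 0`, the
matrix `1 - A` is invertible, and for `x = (1 - A) y` one has `⟪x, M x⟫ = ‖y‖² - ‖A y‖²`.
The eigenvectors of `M` for its `j + 1` largest eigenvalues span a space `U` on which
`⟪x, M x⟫ ≥ λ_j ‖x‖²`; those of `Aᴴ A` for its `n - j` smallest eigenvalues span a space `W` on
which `‖A y‖ ≤ r ‖y‖`. By counting dimensions, `U` meets `(1 - A) W` in some `x = (1 - A) y ≠ 0`,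
and then `λ_j (‖y‖ - ‖A y‖)² ≤ λ_j ‖x‖² ≤ (‖y‖ - ‖A y‖)(‖y‖ + ‖A y‖)`, so
`λ_j ≤ (1 + ‖A y‖/‖y‖) / (1 - ‖A y‖/‖y‖) ≤ (1 + r) / (1 - r)`.
-/

open Matrix
open scoped ComplexOrder

open scoped InnerProductSpace

namespace OrthonormalBasis

variable {ι 𝕜 E : Type*} [Fintype ι] [RCLike 𝕜] [NormedAddCommGroup E] [InnerProductSpace 𝕜 E]
  (b : OrthonormalBasis ι 𝕜 E)

lemma inner_eq_zero_of_mem_span_image {S : Set ι} {x : E} (hx : x ∈ Submodule.span 𝕜 (b '' S))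
    {i : ι} (hi : i ∉ S) : ⟪b i, x⟫_𝕜 = 0 := by
  rw [← b.coe_toBasis, Module.Basis.mem_span_image] at hx
  by_contra h
  exact hi (hx (by simpa [b.coe_toBasis_repr_apply, b.repr_apply_apply] using h))

lemma finrank_span_image (S : Finset ι) :
    Module.finrank 𝕜 (Submodule.span 𝕜 (b '' S)) = S.card := by
  rw [Set.image_eq_range, finrank_span_eq_card, ← Set.toFinset_card, Finset.toFinset_coe]
  exact b.orthonormal.linearIndependent.comp _ Subtype.val_injective

variable {T : E →ₗ[𝕜] E} (hT : T.IsSymmetric) {μ : ι → ℝ} (hb : ∀ i, T (b i) = (μ i : 𝕜) • b i)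
include hT hb

lemma re_inner_map_self_eq_sum (x : E) :
    RCLike.re ⟪x, T x⟫_𝕜 = ∑ i, μ i * ‖⟪b i, x⟫_𝕜‖ ^ 2 := by
  rw [← b.sum_inner_mul_inner, map_sum]
  refine Finset.sum_congr rfl fun i _ => ?_
  rw [← hT, hb, inner_smul_left, RCLike.conj_ofReal, ← inner_conj_symm x, mul_left_comm,
    RCLike.conj_mul, ← RCLike.ofReal_pow, ← RCLike.ofReal_mul, RCLike.ofReal_re]

lemma re_inner_map_self_le_of_mem_span_image {S : Set ι} {c : ℝ} (hc : ∀ i ∈ S, μ i ≤ c)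
    {x : E} (hx : x ∈ Submodule.span 𝕜 (b '' S)) : RCLike.re ⟪x, T x⟫_𝕜 ≤ c * ‖x‖ ^ 2 := by
  rw [b.re_inner_map_self_eq_sum hT hb, ← b.sum_sq_norm_inner_right, Finset.mul_sum]
  refine Finset.sum_le_sum fun i _ => ?_
  by_cases hi : i ∈ S
  · exact mul_le_mul_of_nonneg_right (hc i hi) (sq_nonneg _)
  · simp [b.inner_eq_zero_of_mem_span_image hx hi]

lemma le_re_inner_map_self_of_mem_span_image {S : Set ι} {c : ℝ} (hc : ∀ i ∈ S, c ≤ μ i)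
    {x : E} (hx : x ∈ Submodule.span 𝕜 (b '' S)) : c * ‖x‖ ^ 2 ≤ RCLike.re ⟪x, T x⟫_𝕜 := by
  rw [b.re_inner_map_self_eq_sum hT hb, ← b.sum_sq_norm_inner_right, Finset.mul_sum]
  refine Finset.sum_le_sum fun i _ => ?_
  by_cases hi : i ∈ S
  · exact mul_le_mul_of_nonneg_right (hc i hi) (sq_nonneg _)
  · simp [b.inner_eq_zero_of_mem_span_image hx hi]

lemma re_inner_map_self_lt_of_forall_lt {c : ℝ} (hc : ∀ i, μ i < c) {x : E} (hx : x ≠ 0) :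
    RCLike.re ⟪x, T x⟫_𝕜 < c * ‖x‖ ^ 2 := by
  rw [b.re_inner_map_self_eq_sum hT hb, ← b.sum_sq_norm_inner_right, Finset.mul_sum]
  obtain ⟨i, hi⟩ : ∃ i, ⟪b i, x⟫_𝕜 ≠ 0 := by
    by_contra! h
    exact hx (by simpa [h] using (b.sum_repr' x).symm)
  refine Finset.sum_lt_sum (fun i _ => mul_le_mul_of_nonneg_right (hc i).le (sq_nonneg _))
    ⟨i, Finset.mem_univ i, mul_lt_mul_of_pos_right (hc i) (by positivity)⟩

end OrthonormalBasis

namespace Tuple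

variable {n : ℕ} {α : Type*} [LinearOrder α] (f : Fin n → α)

lemma sub_le_card_filter_sort_le (k : Fin n) :
    n - k ≤ (Finset.univ.filter fun i => f (sort f k) ≤ f i).card := by
  rw [← Fin.card_Ici]
  refine Finset.card_le_card_of_injOn (sort f) (fun i hi => ?_) (sort f).injective.injOn
  simpa using monotone_sort f (Finset.mem_Ici.mp hi)

lemma succ_le_card_filter_le_sort (k : Fin n) :
    k + 1 ≤ (Finset.univ.filter fun i => f i ≤ f (sort f k)).card := by
  rw [← Fin.card_Iic]
  refine Finset.card_le_card_of_injOn (sort f) (fun i hi => ?_) (sort f).injective.injOn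
  simpa using monotone_sort f (Finset.mem_Iic.mp hi)

end Tuple

namespace Matrix

variable {ι 𝕜 : Type*} [Fintype ι] [DecidableEq ι] [RCLike 𝕜]

lemma inner_toEuclideanLin_conjTranspose_mul_mul (P M : Matrix ι ι 𝕜) (y : EuclideanSpace 𝕜 ι) :
    ⟪y, toEuclideanLin (Pᴴ * M * P) y⟫_𝕜 =
      ⟪toEuclideanLin P y, toEuclideanLin M (toEuclideanLin P y)⟫_𝕜 := by
  rw [Matrix.mul_assoc, toLpLin_mul, toEuclideanLin_conjTranspose_eq_adjoint, LinearMap.comp_apply,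
    LinearMap.adjoint_inner_right, toLpLin_mul, LinearMap.comp_apply]

lemma norm_toEuclideanLin_sq (A : Matrix ι ι 𝕜) (y : EuclideanSpace 𝕜 ι) :
    ‖toEuclideanLin A y‖ ^ 2 = RCLike.re ⟪y, toEuclideanLin (Aᴴ * A) y⟫_𝕜 := by
  rw [toLpLin_mul, toEuclideanLin_conjTranspose_eq_adjoint, LinearMap.comp_apply,
    LinearMap.adjoint_inner_right, inner_self_eq_norm_sq]

lemma conjTranspose_one_sub_mul_mul_one_sub {A : Matrix ι ι 𝕜} (hA : IsUnit (1 - A)) :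
    (1 - A)ᴴ * ((1 - Aᴴ)⁻¹ * (1 - Aᴴ * A) * (1 - A)⁻¹) * (1 - A) = 1 - Aᴴ * A := by
  have hAH : IsUnit (1 - Aᴴ) := by simpa [star_eq_conjTranspose] using hA.star
  rw [conjTranspose_sub, conjTranspose_one, Matrix.mul_assoc, Matrix.mul_assoc,
    nonsing_inv_mul _ ((isUnit_iff_isUnit_det _).mp hA), Matrix.mul_one, ← Matrix.mul_assoc,
    mul_nonsing_inv _ ((isUnit_iff_isUnit_det _).mp hAH), Matrix.one_mul]

lemma toEuclideanLin_one_sub_apply (A : Matrix ι ι 𝕜) (y : EuclideanSpace 𝕜 ι) :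
    toEuclideanLin (1 - A) y = y - toEuclideanLin A y := by
  rw [map_sub, toLpLin_one, LinearMap.sub_apply, LinearMap.id_apply]

lemma re_inner_toEuclideanLin_one_sub_eq {A : Matrix ι ι 𝕜} (hA : IsUnit (1 - A))
    (y : EuclideanSpace 𝕜 ι) :
    RCLike.re ⟪toEuclideanLin (1 - A) y,
      toEuclideanLin ((1 - Aᴴ)⁻¹ * (1 - Aᴴ * A) * (1 - A)⁻¹) (toEuclideanLin (1 - A) y)⟫_𝕜 =
      ‖y‖ ^ 2 - ‖toEuclideanLin A y‖ ^ 2 := by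
  rw [← inner_toEuclideanLin_conjTranspose_mul_mul, conjTranspose_one_sub_mul_mul_one_sub hA,
    toEuclideanLin_one_sub_apply, inner_sub_right, map_sub, norm_toEuclideanLin_sq,
    inner_self_eq_norm_sq]

end Matrix

namespace Matrix.IsHermitian

section

variable {ι 𝕜 : Type*} [Fintype ι] [DecidableEq ι] [RCLike 𝕜] {B : Matrix ι ι 𝕜}
  (hB : B.IsHermitian)

lemma toEuclideanLin_eigenvectorBasis_s7 (i : ι) :
    toEuclideanLin B (hB.eigenvectorBasis i) =
      (hB.eigenvalues i : 𝕜) • hB.eigenvectorBasis i := by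
  rw [toLpLin_apply, hB.mulVec_eigenvectorBasis, RCLike.real_smul_eq_coe_smul (K := 𝕜)]
  rfl

lemma re_inner_toEuclideanLin_le_of_mem_span {S : Set ι} {c : ℝ}
    (hc : ∀ i ∈ S, hB.eigenvalues i ≤ c) {x : EuclideanSpace 𝕜 ι}
    (hx : x ∈ Submodule.span 𝕜 (hB.eigenvectorBasis '' S)) :
    RCLike.re ⟪x, toEuclideanLin B x⟫_𝕜 ≤ c * ‖x‖ ^ 2 :=
  hB.eigenvectorBasis.re_inner_map_self_le_of_mem_span_image
    (isSymmetric_toEuclideanLin_iff.mpr hB) hB.toEuclideanLin_eigenvectorBasis_s7 hc hx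

lemma le_re_inner_toEuclideanLin_of_mem_span {S : Set ι} {c : ℝ}
    (hc : ∀ i ∈ S, c ≤ hB.eigenvalues i) {x : EuclideanSpace 𝕜 ι}
    (hx : x ∈ Submodule.span 𝕜 (hB.eigenvectorBasis '' S)) :
    c * ‖x‖ ^ 2 ≤ RCLike.re ⟪x, toEuclideanLin B x⟫_𝕜 :=
  hB.eigenvectorBasis.le_re_inner_map_self_of_mem_span_image
    (isSymmetric_toEuclideanLin_iff.mpr hB) hB.toEuclideanLin_eigenvectorBasis_s7 hc hx

lemma re_inner_toEuclideanLin_lt_of_forall_lt {c : ℝ} (hc : ∀ i, hB.eigenvalues i < c)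
    {x : EuclideanSpace 𝕜 ι} (hx : x ≠ 0) :
    RCLike.re ⟪x, toEuclideanLin B x⟫_𝕜 < c * ‖x‖ ^ 2 :=
  hB.eigenvectorBasis.re_inner_map_self_lt_of_forall_lt
    (isSymmetric_toEuclideanLin_iff.mpr hB) hB.toEuclideanLin_eigenvectorBasis_s7 hc hx

end

section

variable {n : ℕ} {B : Matrix (Fin n) (Fin n) ℂ} (hB : B.IsHermitian)

lemma eigDesc_rev_sort_symm (i : Fin n) :
    eigDesc hB ((Tuple.sort hB.eigenvalues).symm i).rev = hB.eigenvalues i := by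
  simp [eigDesc]

lemma exists_subspace_eigDesc_mul_le (j : Fin n) :
    ∃ U : Submodule ℂ (EuclideanSpace ℂ (Fin n)), j + 1 ≤ Module.finrank ℂ U ∧
      ∀ x ∈ U, eigDesc hB j * ‖x‖ ^ 2 ≤ RCLike.re ⟪x, toEuclideanLin B x⟫_ℂ := by
  classical
  let S := Finset.univ.filter fun i => eigDesc hB j ≤ hB.eigenvalues i
  refine ⟨Submodule.span ℂ (hB.eigenvectorBasis '' S), ?_,
    fun x hx => hB.le_re_inner_toEuclideanLin_of_mem_span (fun i hi => by simpa [S] using hi) hx⟩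
  rw [hB.eigenvectorBasis.finrank_span_image]
  have h : n - j.rev ≤ S.card := Tuple.sub_le_card_filter_sort_le hB.eigenvalues j.rev
  grind

lemma exists_subspace_le_eigDesc_mul (j : Fin n) :
    ∃ W : Submodule ℂ (EuclideanSpace ℂ (Fin n)), n - j ≤ Module.finrank ℂ W ∧
      ∀ x ∈ W, RCLike.re ⟪x, toEuclideanLin B x⟫_ℂ ≤ eigDesc hB j * ‖x‖ ^ 2 := by
  classical
  let S := Finset.univ.filter fun i => hB.eigenvalues i ≤ eigDesc hB j
  refine ⟨Submodule.span ℂ (hB.eigenvectorBasis '' S), ?_,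
    fun x hx => hB.re_inner_toEuclideanLin_le_of_mem_span (fun i hi => by simpa [S] using hi) hx⟩
  rw [hB.eigenvectorBasis.finrank_span_image]
  have h : j.rev + 1 ≤ S.card := Tuple.succ_le_card_filter_le_sort hB.eigenvalues j.rev
  grind

end

end Matrix.IsHermitian

lemma Submodule.exists_mem_inf_ne_zero_of_finrank_lt_add {K V : Type*} [DivisionRing K]
    [AddCommGroup V] [Module K V] [FiniteDimensional K V] {U W : Submodule K V}
    (h : Module.finrank K V < Module.finrank K U + Module.finrank K W) :
    ∃ x ∈ U ⊓ W, x ≠ 0 := by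
  refine Submodule.exists_mem_ne_zero_of_ne_bot fun hbot => h.not_ge ?_
  have := Submodule.finrank_sup_add_finrank_inf_eq U W
  rw [hbot, finrank_bot, add_zero] at this
  exact this ▸ Submodule.finrank_le _

lemma le_one_add_div_one_sub {lam r a b d : ℝ} (hr0 : 0 ≤ r) (hr1 : r < 1) (ha : 0 < a)
    (hb : 0 ≤ b) (hba : b ^ 2 ≤ r ^ 2 * a ^ 2) (hd : a - b ≤ d)
    (hlam : lam * d ^ 2 ≤ a ^ 2 - b ^ 2) :
    lam ≤ (1 + r) / (1 - r) := by
  rcases le_or_gt lam 0 with hlam0 | hlam0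
  · exact hlam0.trans (div_nonneg (by linarith) (by linarith))
  have hba : b ≤ r * a :=
    (pow_le_pow_iff_left₀ hb (by positivity) two_ne_zero).mp (by rwa [mul_pow])
  have hab : 0 < a - b := by nlinarith
  have key : lam * (a - b) ≤ a + b := by
    refine le_of_mul_le_mul_right ?_ hab
    calc lam * (a - b) * (a - b) = lam * (a - b) ^ 2 := by ring
      _ ≤ lam * d ^ 2 := by gcongr
      _ ≤ a ^ 2 - b ^ 2 := hlam
      _ = (a + b) * (a - b) := by ring
  rw [le_div_iff₀ (by linarith)]
  refine le_of_mul_le_mul_right ?_ ha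
  nlinarith

section Contraction

variable {n : ℕ} {A : Matrix (Fin n) (Fin n) ℂ}

lemma singVal_sq (j : Fin n) :
    singVal A j ^ 2 = eigDesc (posSemidef_conjTranspose_mul_self A).isHermitian j :=
  Real.sq_sqrt ((posSemidef_conjTranspose_mul_self A).eigenvalues_nonneg _)

lemma eigenvalues_conjTranspose_mul_self_lt_one (hA : ∀ j, singVal A j < 1) (i : Fin n) :
    (posSemidef_conjTranspose_mul_self A).isHermitian.eigenvalues i < 1 := by
  set hQ := (posSemidef_conjTranspose_mul_self A).isHermitian
  rw [← hQ.eigDesc_rev_sort_symm, ← singVal_sq]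
  exact pow_lt_one₀ (Real.sqrt_nonneg _) (hA _) two_ne_zero

lemma injective_toEuclideanLin_one_sub (hA : ∀ j, singVal A j < 1) :
    Function.Injective (toEuclideanLin (1 - A)) := by
  rw [← LinearMap.ker_eq_bot, LinearMap.ker_eq_bot']
  intro y hy
  by_contra hy0
  have hAy : toEuclideanLin A y = y := by
    rw [toEuclideanLin_one_sub_apply, sub_eq_zero] at hy
    exact hy.symm
  have := (posSemidef_conjTranspose_mul_self A).isHermitian.re_inner_toEuclideanLin_lt_of_forall_lt
    (eigenvalues_conjTranspose_mul_self_lt_one hA) hy0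
  rw [← norm_toEuclideanLin_sq, hAy, one_mul] at this
  exact lt_irrefl _ this

lemma isUnit_one_sub (hA : ∀ j, singVal A j < 1) : IsUnit (1 - A) :=
  mulVec_injective_iff_isUnit.mp fun u v huv =>
    WithLp.toLp_injective 2
      (injective_toEuclideanLin_one_sub hA (by simp only [toLpLin_apply, huv]))

end Contraction

theorem stmt7 {n : ℕ} (A : Matrix (Fin n) (Fin n) ℂ) (hA : ∀ j, singVal A j < 1)
    (hM : ((1 - Aᴴ)⁻¹ * (1 - Aᴴ * A) * (1 - A)⁻¹).IsHermitian) (j : Fin n) :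
    eigDesc hM j ≤ (1 + singVal A j) / (1 - singVal A j) := by
  have hQ := (posSemidef_conjTranspose_mul_self A).isHermitian
  have hinj := injective_toEuclideanLin_one_sub hA
  obtain ⟨U, hU, hUM⟩ := hM.exists_subspace_eigDesc_mul_le j
  obtain ⟨W, hW, hWQ⟩ := hQ.exists_subspace_le_eigDesc_mul j
  have hV : Module.finrank ℂ W = Module.finrank ℂ (W.map (toEuclideanLin (1 - A))) :=
    (Submodule.equivMapOfInjective _ hinj W).finrank_eq
  obtain ⟨_, ⟨hxU, y, hyW, rfl⟩, hx0⟩ :=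
    Submodule.exists_mem_inf_ne_zero_of_finrank_lt_add (U := U) (W := W.map _)
      (by rw [finrank_euclideanSpace_fin, ← hV]; omega)
  have hy0 : y ≠ 0 := by rintro rfl; simp at hx0
  refine le_one_add_div_one_sub (d := ‖toEuclideanLin (1 - A) y‖) (Real.sqrt_nonneg _) (hA j)
    (norm_pos_iff.mpr hy0) (norm_nonneg (toEuclideanLin A y)) ?_ ?_ ?_
  · rw [singVal_sq, norm_toEuclideanLin_sq]; exact hWQ y hyW
  · rw [toEuclideanLin_one_sub_apply]; exact norm_sub_norm_le _ _
  · rw [← re_inner_toEuclideanLin_one_sub_eq (isUnit_one_sub hA)]; exact hUM _ hxU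
end

section
/- Let A be an n×n strict contraction with singular values r_1 ≥ … ≥ r_n, and let 1 ≤ i_1 < … < i_k ≤ n. Then ∏_{j=1}^k λ_{n−i_j+1}((I−A*)⁻¹(I−A*A)(I−A)⁻¹) ≥ ∏_{j=1}^k (1−r_{i_j}²)/(1+r_j)² ≥ ∏_{j=1}^k (1−r_j)/(1+r_j). -/
open Matrix
open scoped ComplexOrder

section Aux

open Module Submodule
open scoped InnerProductSpace

variable {n : ℕ} {T : Matrix (Fin n) (Fin n) ℂ}

noncomputable def ascEig (hT : T.IsHermitian) : Fin n → ℝ :=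
  hT.eigenvalues ∘ Tuple.sort hT.eigenvalues

noncomputable def ascVec (hT : T.IsHermitian) (j : Fin n) : EuclideanSpace ℂ (Fin n) :=
  hT.eigenvectorBasis (Tuple.sort hT.eigenvalues j)

lemma ascVec_orthonormal (hT : T.IsHermitian) : Orthonormal ℂ (ascVec hT) :=
  hT.eigenvectorBasis.orthonormal.comp _ (Equiv.injective _)

lemma toEuclideanLin_ascVec (hT : T.IsHermitian) (j : Fin n) :
    Matrix.toEuclideanLin T (ascVec hT j) = (ascEig hT j : ℂ) • ascVec hT j := by
  have h := hT.mulVec_eigenvectorBasis (Tuple.sort hT.eigenvalues j)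
  ext i
  simpa [toEuclideanLin_apply, ascVec, ascEig] using congrFun h i

noncomputable def lowSpan (hT : T.IsHermitian) (m : Fin n) :
    Submodule ℂ (EuclideanSpace ℂ (Fin n)) :=
  Submodule.span ℂ (Set.range fun j : Fin (m.val + 1) => ascVec hT (Fin.castLE m.isLt j))

lemma finrank_lowSpan (hT : T.IsHermitian) (m : Fin n) :
    finrank ℂ (lowSpan hT m) = m.val + 1 := by
  rw [lowSpan, finrank_span_eq_card]
  · simp
  · exact ((ascVec_orthonormal hT).comp _ (Fin.castLE_injective _)).linearIndependent

lemma rayleigh_le (hT : T.IsHermitian) (m : Fin n) (x : EuclideanSpace ℂ (Fin n))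
    (hx : x ∈ lowSpan hT m) :
    RCLike.re ⟪x, Matrix.toEuclideanLin T x⟫_ℂ ≤ ascEig hT m * ‖x‖ ^ 2 := by
  rw [lowSpan] at hx
  obtain ⟨c, rfl⟩ := (mem_span_range_iff_exists_fun ℂ).mp hx
  set w : Fin (m.val + 1) → EuclideanSpace ℂ (Fin n) :=
    fun j => ascVec hT (Fin.castLE m.isLt j) with hw
  have hon : Orthonormal ℂ w := (ascVec_orthonormal hT).comp _ (Fin.castLE_injective _)
  have hT1 : Matrix.toEuclideanLin T (∑ j, c j • w j)
      = ∑ j, (c j * (ascEig hT (Fin.castLE m.isLt j) : ℂ)) • w j := by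
    rw [map_sum]
    refine Finset.sum_congr rfl fun j _ => ?_
    rw [_root_.map_smul, toEuclideanLin_ascVec, smul_smul]
  rw [hT1]
  have h2 : ⟪∑ j, c j • w j, ∑ j, (c j * (ascEig hT (Fin.castLE m.isLt j) : ℂ)) • w j⟫_ℂ
      = ∑ j, (starRingEnd ℂ) (c j) * (c j * (ascEig hT (Fin.castLE m.isLt j) : ℂ)) :=
    hon.inner_sum _ _ Finset.univ
  have h3 : (‖∑ j, c j • w j‖ : ℝ) ^ 2 = ∑ j, ‖c j‖ ^ 2 := by
    have := hon.inner_sum c c Finset.univ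
    have h4 : RCLike.re ⟪∑ j, c j • w j, ∑ j, c j • w j⟫_ℂ = ‖∑ j, c j • w j‖ ^ 2 :=
      inner_self_eq_norm_sq (𝕜 := ℂ) _
    rw [← h4, this]
    rw [map_sum]
    refine Finset.sum_congr rfl fun j _ => ?_
    rw [RCLike.conj_mul]
    simp only [← RCLike.ofReal_pow]
    simp [← Complex.ofReal_pow]
  rw [h2, h3, map_sum, Finset.mul_sum]
  refine Finset.sum_le_sum fun j _ => ?_
  have : (starRingEnd ℂ) (c j) * (c j * (ascEig hT (Fin.castLE m.isLt j) : ℂ))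
      = ((‖c j‖ : ℂ) ^ 2) * (ascEig hT (Fin.castLE m.isLt j) : ℂ) := by
    rw [← mul_assoc, RCLike.conj_mul]; norm_num
  rw [this]
  have hre : RCLike.re (((‖c j‖ : ℂ) ^ 2) * (ascEig hT (Fin.castLE m.isLt j) : ℂ))
      = ‖c j‖ ^ 2 * ascEig hT (Fin.castLE m.isLt j) := by
    norm_cast
  rw [hre]
  have hle : ascEig hT (Fin.castLE m.isLt j) ≤ ascEig hT m := by
    refine Tuple.monotone_sort hT.eigenvalues ?_
    exact Fin.mk_le_mk.mpr (Nat.lt_succ_iff.mp j.isLt)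
  nlinarith [sq_nonneg ‖c j‖, hle]

lemma le_ascEig (hT : T.IsHermitian) (m : Fin n) (V : Submodule ℂ (EuclideanSpace ℂ (Fin n)))
    (hV : finrank ℂ V = n - m.val) (c : ℝ)
    (hc : ∀ x ∈ V, c * ‖x‖ ^ 2 ≤ RCLike.re ⟪x, Matrix.toEuclideanLin T x⟫_ℂ) :
    c ≤ ascEig hT m := by
  have hdim : 0 < finrank ℂ ↥(V ⊓ lowSpan hT m) := by
    have h1 := Submodule.finrank_sup_add_finrank_inf_eq V (lowSpan hT m)
    have h2 : finrank ℂ ↥(V ⊔ lowSpan hT m) ≤ n := by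
      simpa [finrank_euclideanSpace] using Submodule.finrank_le (V ⊔ lowSpan hT m)
    have h3 := finrank_lowSpan hT m
    have hm := m.isLt
    omega
  obtain ⟨x, hx0⟩ := Module.finrank_pos_iff_exists_ne_zero.mp hdim
  have hxV : (x : EuclideanSpace ℂ (Fin n)) ∈ V := x.2.1
  have hxS : (x : EuclideanSpace ℂ (Fin n)) ∈ lowSpan hT m := x.2.2
  have hxne : (x : EuclideanSpace ℂ (Fin n)) ≠ 0 := fun h => hx0 (Subtype.ext h)
  have h1 := hc x hxV
  have h2 := rayleigh_le hT m x hxS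
  have h3 : (0:ℝ) < ‖(x : EuclideanSpace ℂ (Fin n))‖ ^ 2 := by
    have := norm_pos_iff.mpr hxne
    positivity
  nlinarith

lemma toEuclideanLin_mul (X Y : Matrix (Fin n) (Fin n) ℂ) :
    Matrix.toEuclideanLin (X * Y) = (Matrix.toEuclideanLin X).comp (Matrix.toEuclideanLin Y) := by
  ext v i
  simp [toEuclideanLin_apply, mulVec_mulVec]

lemma toEuclideanLin_one' : Matrix.toEuclideanLin (1 : Matrix (Fin n) (Fin n) ℂ) = LinearMap.id := by
  ext v i
  simp [toEuclideanLin_apply]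

lemma eigDesc_eq_ascEig {A : Matrix (Fin n) (Fin n) ℂ} (hA : A.IsHermitian) (j : Fin n) :
    eigDesc hA j = ascEig hA j.rev := rfl

lemma singVal_eq (A : Matrix (Fin n) (Fin n) ℂ) (m : Fin n) :
    singVal A m
      = Real.sqrt (ascEig (Matrix.posSemidef_conjTranspose_mul_self A).isHermitian m.rev) := rfl

lemma ascEig_P_nonneg (A : Matrix (Fin n) (Fin n) ℂ) (j : Fin n) :
    0 ≤ ascEig (Matrix.posSemidef_conjTranspose_mul_self A).isHermitian j :=
  (Matrix.posSemidef_conjTranspose_mul_self A).eigenvalues_nonneg _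

lemma singVal_nonneg (A : Matrix (Fin n) (Fin n) ℂ) (m : Fin n) : 0 ≤ singVal A m :=
  Real.sqrt_nonneg _

lemma singVal_sq_s10 (A : Matrix (Fin n) (Fin n) ℂ) (m : Fin n) :
    singVal A m ^ 2 = ascEig (Matrix.posSemidef_conjTranspose_mul_self A).isHermitian m.rev :=
  Real.sq_sqrt (ascEig_P_nonneg A m.rev)

lemma singVal_antitone (A : Matrix (Fin n) (Fin n) ℂ) : Antitone (singVal A) := by
  intro j j' h
  exact Real.sqrt_le_sqrt (Tuple.monotone_sort _ (Fin.rev_le_rev.mpr h))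

lemma re_inner_conjTranspose_mul_self (B : Matrix (Fin n) (Fin n) ℂ)
    (x : EuclideanSpace ℂ (Fin n)) :
    RCLike.re ⟪x, Matrix.toEuclideanLin (Bᴴ * B) x⟫_ℂ = ‖Matrix.toEuclideanLin B x‖ ^ 2 := by
  rw [toEuclideanLin_mul, LinearMap.comp_apply, Matrix.toEuclideanLin_conjTranspose_eq_adjoint,
    LinearMap.adjoint_inner_right]
  exact inner_self_eq_norm_sq (𝕜 := ℂ) _

lemma quad_congr (L M : Matrix (Fin n) (Fin n) ℂ) (y : EuclideanSpace ℂ (Fin n)) :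
    ⟪Matrix.toEuclideanLin L y,
        Matrix.toEuclideanLin M (Matrix.toEuclideanLin L y)⟫_ℂ
      = ⟪y, Matrix.toEuclideanLin (Lᴴ * M * L) y⟫_ℂ := by
  rw [toEuclideanLin_mul, toEuclideanLin_mul, Matrix.toEuclideanLin_conjTranspose_eq_adjoint]
  simp [LinearMap.adjoint_inner_right]

lemma quad_sub_self (A : Matrix (Fin n) (Fin n) ℂ) (y : EuclideanSpace ℂ (Fin n)) :
    RCLike.re ⟪y, Matrix.toEuclideanLin (1 - Aᴴ * A) y⟫_ℂ
      = ‖y‖ ^ 2 - ‖Matrix.toEuclideanLin A y‖ ^ 2 := by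
  rw [map_sub, LinearMap.sub_apply, toEuclideanLin_one', LinearMap.id_apply, inner_sub_right,
    map_sub]
  rw [re_inner_conjTranspose_mul_self]
  congr 1
  exact inner_self_eq_norm_sq (𝕜 := ℂ) _

lemma det_one_sub_ne_zero {A : Matrix (Fin n) (Fin n) ℂ} (hn : 0 < n)
    (hA : ∀ j, singVal A j < 1) : (1 - A).det ≠ 0 := by
  intro h
  obtain ⟨v, hv0, hv⟩ := Matrix.exists_mulVec_eq_zero_iff.mpr h
  have hAv : A *ᵥ v = v := by
    have := hv
    rw [Matrix.sub_mulVec, Matrix.one_mulVec, sub_eq_zero] at this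
    exact this.symm
  set x : EuclideanSpace ℂ (Fin n) := (WithLp.equiv 2 _).symm v with hx
  have hx0 : x ≠ 0 := by
    simpa [hx] using hv0
  set mTop : Fin n := ⟨n - 1, by omega⟩ with hmTop
  have htop : lowSpan (Matrix.posSemidef_conjTranspose_mul_self A).isHermitian mTop = ⊤ := by
    apply Submodule.eq_top_of_finrank_eq
    rw [finrank_lowSpan, finrank_euclideanSpace]
    simp [hmTop]
    omega
  have hray := rayleigh_le (Matrix.posSemidef_conjTranspose_mul_self A).isHermitian mTop x
    (htop ▸ Submodule.mem_top)
  rw [re_inner_conjTranspose_mul_self] at hray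
  have hAx : Matrix.toEuclideanLin A x = x := by
    ext i
    simp [toEuclideanLin_apply, hx, hAv]
  rw [hAx] at hray
  have hs := hA mTop.rev
  have hs0 := singVal_nonneg A mTop.rev
  have hsq := singVal_sq_s10 A mTop.rev
  rw [Fin.rev_rev] at hsq
  have hxn : 0 < ‖x‖ ^ 2 := by
    have := norm_pos_iff.mpr hx0
    positivity
  rw [← hsq] at hray
  have hs2 : singVal A mTop.rev ^ 2 < 1 := by nlinarith
  nlinarith [mul_lt_mul_of_pos_right hs2 hxn]

set_option maxHeartbeats 800000 in
lemma main_bound {A : Matrix (Fin n) (Fin n) ℂ} (hA : ∀ j, singVal A j < 1)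
    (hM : ((1 - Aᴴ)⁻¹ * (1 - Aᴴ * A) * (1 - A)⁻¹).IsHermitian) (m : Fin n) :
    (1 - singVal A m) / (1 + singVal A m) ≤ eigDesc hM m.rev := by
  have hn : 0 < n := m.pos
  set r := singVal A m with hr
  have hr0 : 0 ≤ r := singVal_nonneg A m
  have hr1 : r < 1 := hA m
  have hdet : (1 - A).det ≠ 0 := det_one_sub_ne_zero hn hA
  have hct : (1 - A)ᴴ = 1 - Aᴴ := by simp
  have hdet' : (1 - Aᴴ).det ≠ 0 := by
    rw [← hct, Matrix.det_conjTranspose]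
    simpa using hdet
  have h1 : IsUnit (1 - A).det := isUnit_iff_ne_zero.mpr hdet
  have h2 : IsUnit (1 - Aᴴ).det := isUnit_iff_ne_zero.mpr hdet'
  set M := (1 - Aᴴ)⁻¹ * (1 - Aᴴ * A) * (1 - A)⁻¹ with hMdef
  have hkey : (1 - A)ᴴ * M * (1 - A) = 1 - Aᴴ * A := by
    rw [hct, hMdef]
    calc (1 - Aᴴ) * ((1 - Aᴴ)⁻¹ * (1 - Aᴴ * A) * (1 - A)⁻¹) * (1 - A)
        = ((1 - Aᴴ) * (1 - Aᴴ)⁻¹) * ((1 - Aᴴ * A) * ((1 - A)⁻¹ * (1 - A))) := by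
          simp only [Matrix.mul_assoc]
      _ = 1 - Aᴴ * A := by
          rw [Matrix.mul_nonsing_inv _ h2, Matrix.nonsing_inv_mul _ h1, one_mul, mul_one]
  set tL := Matrix.toEuclideanLin (1 - A) with htL
  have hinj : Function.Injective tL := by
    rw [htL, ← LinearMap.ker_eq_bot, Submodule.eq_bot_iff]
    intro y hy
    by_contra hy0
    apply hdet
    rw [← Matrix.exists_mulVec_eq_zero_iff]
    refine ⟨WithLp.equiv 2 _ y, by simpa using hy0, ?_⟩
    have h0 := congrArg (WithLp.equiv 2 (Fin n → ℂ)) (hy : Matrix.toEuclideanLin (1 - A) y = 0)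
    simpa [Matrix.sub_mulVec, Matrix.one_mulVec, sub_eq_zero] using h0
  set hPH := (Matrix.posSemidef_conjTranspose_mul_self A).isHermitian with hPHdef
  set W := lowSpan hPH m.rev with hWdef
  set V := Submodule.map tL W with hVdef
  have hVrank : finrank ℂ V = n - m.val := by
    rw [hVdef, ← (Submodule.equivMapOfInjective tL hinj W).finrank_eq, hWdef, finrank_lowSpan]
    have := m.isLt
    simp only [Fin.val_rev]
    omega
  have hc : ∀ x ∈ V, (1 - r) / (1 + r) * ‖x‖ ^ 2
      ≤ RCLike.re ⟪x, Matrix.toEuclideanLin M x⟫_ℂ := by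
    rintro x hx
    obtain ⟨y, hy, rfl⟩ := Submodule.mem_map.mp hx
    have hquad : RCLike.re ⟪tL y, Matrix.toEuclideanLin M (tL y)⟫_ℂ
        = ‖y‖ ^ 2 - ‖Matrix.toEuclideanLin A y‖ ^ 2 := by
      rw [htL, quad_congr, hkey, quad_sub_self]
    set a := ‖y‖ with ha
    set b := ‖Matrix.toEuclideanLin A y‖ with hb
    have ha0 : 0 ≤ a := norm_nonneg _
    have hb0 : 0 ≤ b := norm_nonneg _
    have hb2 : b ^ 2 ≤ r ^ 2 * a ^ 2 := by
      have hray := rayleigh_le hPH m.rev y hy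
      rw [re_inner_conjTranspose_mul_self] at hray
      have hsq : r ^ 2 = ascEig hPH m.rev := singVal_sq_s10 A m
      rw [← hsq] at hray
      linarith
    have hba : b ≤ r * a := by
      have h' := Real.sqrt_le_sqrt hb2
      rwa [Real.sqrt_sq hb0, show r ^ 2 * a ^ 2 = (r * a) ^ 2 by ring,
        Real.sqrt_sq (mul_nonneg hr0 ha0)] at h'
    have hxle : ‖tL y‖ ≤ a + b := by
      have hsub : tL y = y - Matrix.toEuclideanLin A y := by
        rw [htL, map_sub, LinearMap.sub_apply, toEuclideanLin_one', LinearMap.id_apply]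
      rw [hsub]
      exact norm_sub_le _ _
    have h1r : (0:ℝ) < 1 + r := by linarith
    have hc0 : 0 ≤ (1 - r) / (1 + r) := div_nonneg (by linarith) h1r.le
    have hx2 : ‖tL y‖ ^ 2 ≤ (a + b) ^ 2 := by nlinarith [norm_nonneg (tL y)]
    have hkey2 : (1 - r) / (1 + r) * (a + b) ^ 2 ≤ a ^ 2 - b ^ 2 := by
      rw [div_mul_eq_mul_div, div_le_iff₀ h1r]
      nlinarith [mul_nonneg (add_nonneg ha0 hb0) (sub_nonneg.mpr hba)]
    calc (1 - r) / (1 + r) * ‖tL y‖ ^ 2 ≤ (1 - r) / (1 + r) * (a + b) ^ 2 :=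
          mul_le_mul_of_nonneg_left hx2 hc0
      _ ≤ a ^ 2 - b ^ 2 := hkey2
      _ = RCLike.re ⟪tL y, Matrix.toEuclideanLin M (tL y)⟫_ℂ := hquad.symm
  have hfin := le_ascEig hM m V hVrank _ hc
  rw [eigDesc_eq_ascEig, Fin.rev_rev]
  exact hfin

lemma strictMono_val_le {k m : ℕ} {f : Fin k → Fin m} (hf : StrictMono f) (j : Fin k) :
    (j : ℕ) ≤ (f j : ℕ) := by
  have key : ∀ v : ℕ, ∀ h : v < k, v ≤ (f ⟨v, h⟩ : ℕ) := by
    intro v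
    induction v with
    | zero => intro h; exact Nat.zero_le _
    | succ v ih =>
      intro h
      have hv : v < k := Nat.lt_of_succ_lt h
      have h1 : f ⟨v, hv⟩ < f ⟨v + 1, h⟩ := hf (by simp [Fin.mk_lt_mk])
      have h2 := ih hv
      have h3 : (f ⟨v, hv⟩ : ℕ) < (f ⟨v + 1, h⟩ : ℕ) := h1
      omega
  simpa using key j.val j.isLt

end Aux

theorem stmt10 {n k : ℕ} (hk : k ≤ n) (A : Matrix (Fin n) (Fin n) ℂ) (hA : ∀ j, singVal A j < 1)
    (hM : ((1 - Aᴴ)⁻¹ * (1 - Aᴴ * A) * (1 - A)⁻¹).IsHermitian) (i : Fin k → Fin n) (hi : StrictMono i) :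
    (∏ j : Fin k, eigDesc hM (i j).rev) ≥
        (∏ j : Fin k, (1 - singVal A (i j) ^ 2) / (1 + singVal A (Fin.castLE hk j)) ^ 2) ∧
      (∏ j : Fin k, (1 - singVal A (i j) ^ 2) / (1 + singVal A (Fin.castLE hk j)) ^ 2) ≥
        ∏ j : Fin k, (1 - singVal A (Fin.castLE hk j)) / (1 + singVal A (Fin.castLE hk j)) := by
  have hidx : ∀ j : Fin k, Fin.castLE hk j ≤ i j := by
    intro j
    rw [Fin.le_def]
    simpa using strictMono_val_le hi j
  have hrs : ∀ j : Fin k, singVal A (i j) ≤ singVal A (Fin.castLE hk j) := fun j =>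
    singVal_antitone A (hidx j)
  have hfac_nonneg : ∀ j : Fin k,
      0 ≤ (1 - singVal A (i j) ^ 2) / (1 + singVal A (Fin.castLE hk j)) ^ 2 := by
    intro j
    have h1 := singVal_nonneg A (i j)
    have h2 := hA (i j)
    have h3 := singVal_nonneg A (Fin.castLE hk j)
    apply div_nonneg (by nlinarith)
    positivity
  constructor
  · rw [ge_iff_le]
    apply Finset.prod_le_prod (fun j _ => hfac_nonneg j)
    intro j _
    set r := singVal A (i j) with hrdef
    set s := singVal A (Fin.castLE hk j) with hsdef
    have hr0 : 0 ≤ r := singVal_nonneg A (i j)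
    have hr1 : r < 1 := hA (i j)
    have hs0 : 0 ≤ s := singVal_nonneg A (Fin.castLE hk j)
    have hrs' : r ≤ s := hrs j
    have hmb := main_bound hA hM (i j)
    have e1 : (1 - r ^ 2) / (1 + r) ^ 2 = (1 - r) / (1 + r) := by
      rw [show 1 - r ^ 2 = (1 - r) * (1 + r) by ring,
        show (1 + r) ^ 2 = (1 + r) * (1 + r) by ring,
        mul_div_mul_right _ _ (by linarith : (1:ℝ) + r ≠ 0)]
    have e2 : (1 - r ^ 2) / (1 + s) ^ 2 ≤ (1 - r ^ 2) / (1 + r) ^ 2 := by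
      apply div_le_div_of_nonneg_left (by nlinarith) (by positivity)
      nlinarith
    calc (1 - r ^ 2) / (1 + s) ^ 2 ≤ (1 - r ^ 2) / (1 + r) ^ 2 := e2
      _ = (1 - r) / (1 + r) := e1
      _ ≤ eigDesc hM (i j).rev := hmb
  · rw [ge_iff_le]
    apply Finset.prod_le_prod
    · intro j _
      have hs0 := singVal_nonneg A (Fin.castLE hk j)
      have hs1 := hA (Fin.castLE hk j)
      apply div_nonneg (by linarith) (by linarith)
    · intro j _
      set r := singVal A (i j) with hrdef
      set s := singVal A (Fin.castLE hk j) with hsdef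
      have hr0 : 0 ≤ r := singVal_nonneg A (i j)
      have hs0 : 0 ≤ s := singVal_nonneg A (Fin.castLE hk j)
      have hs1 : s < 1 := hA (Fin.castLE hk j)
      have hrs' : r ≤ s := hrs j
      have e1 : (1 - s) / (1 + s) = (1 - s ^ 2) / (1 + s) ^ 2 := by
        rw [show 1 - s ^ 2 = (1 - s) * (1 + s) by ring,
          show (1 + s) ^ 2 = (1 + s) * (1 + s) by ring,
          mul_div_mul_right _ _ (by linarith : (1:ℝ) + s ≠ 0)]
      rw [e1]
      apply div_le_div_of_nonneg_right ?_ (by positivity)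
      · nlinarith
end

section
/- Let A be a normal n×n strict contraction. Then for each j = 1,…,n, λ_j(Re((I−A)⁻¹)) ≥ λ_j((I+|A|)⁻¹), where |A| = (A*A)^{1/2} and Re(X) = (X+X*)/2. -/
/-!
A normal matrix is unitarily diagonalisable, `A = U diag(μ) U*`: a joint orthonormal eigenbasis of
its commuting real and imaginary parts gives the columns of `U`. In that basis
`Re((1 - A)⁻¹) = U diag(Re (1 - μᵢ)⁻¹) U*`, while `(1 + |A|)⁻¹` has the eigenvalues
`(1 + |μᵢ|)⁻¹`, since the eigenvalues of `A* A` are the `|μᵢ|²`. The claim thus reduces to the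
scalar inequality `(1 + |z|)⁻¹ ≤ Re (1 - z)⁻¹` for `|z| < 1`, together with the fact that sorting
a real tuple is monotone for the pointwise order.
-/

open Matrix
open scoped ComplexOrder

/-- The positive semidefinite square root `Matrix.PosSemidef.sqrt` of the older Mathlib,
spelled out with its old definition (removed from Mathlib). -/
noncomputable def PosSemidef.oldSqrt {n : ℕ} {A : Matrix (Fin n) (Fin n) ℂ} (hA : A.PosSemidef) :
    Matrix (Fin n) (Fin n) ℂ :=
  (hA.isHermitian.eigenvectorUnitary : Matrix (Fin n) (Fin n) ℂ) *
    diagonal ((↑) ∘ (√·) ∘ hA.isHermitian.eigenvalues) *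
    (star hA.isHermitian.eigenvectorUnitary : Matrix (Fin n) (Fin n) ℂ)

open Unitary

namespace Tuple

variable {α : Type*} [LinearOrder α] {n : ℕ}

theorem ofFn_comp_sort (f : Fin n → α) :
    List.ofFn (f ∘ sort f) = (Finset.univ.val.map f).sort := by
  refine List.Perm.eq_of_sortedLE (monotone_sort f).sortedLE_ofFn
    (List.sortedLE_iff_pairwise.mpr (Multiset.pairwise_sort _ _)) ?_
  rw [← Multiset.coe_eq_coe, Multiset.sort_eq, ← Fin.univ_val_map, ← Multiset.map_map,
    Multiset.map_univ_val_equiv]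

theorem comp_sort_eq_of_map_univ_eq {f g : Fin n → α}
    (h : Finset.univ.val.map f = Finset.univ.val.map g) : f ∘ sort f = g ∘ sort g :=
  List.ofFn_injective (by rw [ofFn_comp_sort, ofFn_comp_sort, h])

theorem comp_sort_le_comp_sort {f g : Fin n → α} (h : ∀ i, f i ≤ g i) (k : Fin n) :
    (f ∘ sort f) k ≤ (g ∘ sort g) k := by
  classical
  -- pigeonhole: the `n - k` indices sorted at or above `k` by `f` meet the `k + 1` sorted at or
  -- below `k` by `g`
  obtain ⟨i, hi⟩ : ((Finset.Ici k).image (sort f) ∩ (Finset.Iic k).image (sort g)).Nonempty := by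
    refine Finset.inter_nonempty_of_card_lt_card_add_card (Finset.subset_univ _)
      (Finset.subset_univ _) ?_
    simp only [Finset.card_image_of_injective _ (Equiv.injective _), Fin.card_Ici, Fin.card_Iic,
      Finset.card_univ, Fintype.card_fin]
    omega
  obtain ⟨⟨a, ha, rfl⟩, ⟨b, hb, hab⟩⟩ :=
    And.imp Finset.mem_image.mp Finset.mem_image.mp (Finset.mem_inter.mp hi)
  calc (f ∘ sort f) k ≤ (f ∘ sort f) a := monotone_sort f (Finset.mem_Ici.mp ha)
    _ ≤ g (sort f a) := h _
    _ = (g ∘ sort g) b := by simp [hab]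
    _ ≤ (g ∘ sort g) k := monotone_sort g (Finset.mem_Iic.mp hb)

end Tuple

open Module.End in
theorem LinearMap.IsSymmetric.exists_orthonormalBasis_eigenvectors_of_commute
    {𝕜 E ι : Type*} [RCLike 𝕜] [NormedAddCommGroup E] [InnerProductSpace 𝕜 E]
    [FiniteDimensional 𝕜 E] [Fintype ι] {S T : E →ₗ[𝕜] E} (hS : S.IsSymmetric)
    (hT : T.IsSymmetric) (hST : Commute S T) (hι : Module.finrank 𝕜 E = Fintype.card ι) :
    ∃ (b : OrthonormalBasis ι 𝕜 E) (α β : ι → 𝕜),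
      ∀ i, S (b i) = α i • b i ∧ T (b i) = β i • b i := by
  classical
  have hV := directSum_isInternal_of_commute hS hT hST
  have := hV.submodule_iSupIndep.fintypeNeBotOfFiniteDimensional
  have hV' := (orthogonalFamily_eigenspace_inf_eigenspace hS hT).comp
    (Subtype.val_injective (p := fun p : 𝕜 × 𝕜 => eigenspace S p.2 ⊓ eigenspace T p.1 ≠ ⊥))
  have hV₀ := DirectSum.isInternal_ne_bot_iff.mpr hV
  let p : ι → 𝕜 × 𝕜 := fun i =>
    (hV₀.subordinateOrthonormalBasisIndex hι ((Fintype.equivFin ι) i) hV').val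
  refine ⟨(hV₀.subordinateOrthonormalBasis hι hV').reindex (Fintype.equivFin ι).symm,
    fun i => (p i).2, fun i => (p i).1, fun i => ?_⟩
  have hmem := hV₀.subordinateOrthonormalBasis_subordinate hι ((Fintype.equivFin ι) i) hV'
  simpa only [OrthonormalBasis.reindex_apply, Equiv.symm_symm, Submodule.mem_inf,
    mem_eigenspace_iff] using hmem

namespace Matrix

variable {m : Type*} [Fintype m] [DecidableEq m]

open ComplexStarModule in
theorem exists_unitary_diagonal_of_isStarNormal (A : Matrix m m ℂ) [IsStarNormal A] :
    ∃ (U : unitaryGroup m ℂ) (μ : m → ℂ), A = conjStarAlgAut ℂ _ U (diagonal μ) := by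
  have hS := isSymmetric_toEuclideanLin_iff.mpr (ℜ A).2
  have hT := isSymmetric_toEuclideanLin_iff.mpr (ℑ A).2
  obtain ⟨b, α, β, hb⟩ := hS.exists_orthonormalBasis_eigenvectors_of_commute hT
    ((Commute.realPart_imaginaryPart A).map (toLpLinAlgEquiv 2)) finrank_euclideanSpace
  let U : unitaryGroup m ℂ := ⟨(EuclideanSpace.basisFun m ℂ).toBasis.toMatrix b.toBasis,
    (EuclideanSpace.basisFun m ℂ).toMatrix_orthonormalBasis_mem_unitary b⟩
  have hAb : ∀ j, A *ᵥ b j = (α j + Complex.I * β j) • b j := by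
    intro j
    have h := congr(WithLp.ofLp ($((hb j).1) + Complex.I • $((hb j).2)))
    rw [← realPart_add_I_smul_imaginaryPart A, add_mulVec, smul_mulVec]
    simpa [toLpLin_apply, add_smul, mul_smul] using h
  have hAU : A * U = U * diagonal (fun j => α j + Complex.I * β j) := by
    ext i j
    rw [mul_diagonal, mul_comm]
    exact congrFun (hAb j) i
  refine ⟨U, fun j => α j + Complex.I * β j, ?_⟩
  rw [conjStarAlgAut_apply, ← hAU, mul_assoc, mul_star_self_of_mem U.2, mul_one]

theorem charpoly_conjStarAlgAut {R : Type*} [CommRing R] [StarRing R] (U : unitaryGroup m R)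
    (M : Matrix m m R) : (conjStarAlgAut R _ U M).charpoly = M.charpoly := by
  rw [conjStarAlgAut_apply, mul_assoc, charpoly_mul_comm, mul_assoc, star_mul_self_of_mem U.2,
    mul_one]

theorem IsHermitian.map_eigenvalues_eq_of_eq_conj_diagonal {𝕜 : Type*} [RCLike 𝕜]
    {B : Matrix m m 𝕜} (hB : B.IsHermitian) {U : unitaryGroup m 𝕜} {d : m → ℝ}
    (h : B = conjStarAlgAut 𝕜 _ U (diagonal (RCLike.ofReal ∘ d))) :
    Finset.univ.val.map hB.eigenvalues = Finset.univ.val.map d := by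
  have hchar : B.charpoly = ∏ i, (Polynomial.X - Polynomial.C (d i : 𝕜)) := by
    rw [h, charpoly_conjStarAlgAut, charpoly_diagonal]
    rfl
  have hroots := hB.roots_charpoly_eq_eigenvalues
  rw [hchar, Polynomial.roots_prod _ _ (Finset.prod_ne_zero_iff.mpr fun i _ =>
    Polynomial.X_sub_C_ne_zero _)] at hroots
  simp only [Polynomial.roots_X_sub_C, Multiset.bind_singleton] at hroots
  exact Multiset.map_injective RCLike.ofReal_injective
    (by rw [Multiset.map_map, Multiset.map_map, ← hroots]; rfl)

theorem inv_diagonal_of_ne_zero {K : Type*} [Field K] {v : m → K} (hv : ∀ i, v i ≠ 0) :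
    (diagonal v)⁻¹ = diagonal v⁻¹ := by
  refine inv_eq_left_inv ?_
  rw [diagonal_mul_diagonal, ← diagonal_one]
  exact congrArg diagonal (funext fun i => inv_mul_cancel₀ (hv i))

theorem conjStarAlgAut_nonsing_inv {R : Type*} [CommRing R] [StarRing R] (U : unitaryGroup m R)
    (M : Matrix m m R) : conjStarAlgAut R _ U M⁻¹ = (conjStarAlgAut R _ U M)⁻¹ := by
  rw [conjStarAlgAut_apply, conjStarAlgAut_apply, mul_inv_rev, mul_inv_rev,
    inv_eq_left_inv (mul_star_self_of_mem U.2), inv_eq_left_inv (star_mul_self_of_mem U.2),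
    mul_assoc]

theorem conjTranspose_mul_self_conjStarAlgAut_diagonal (U : unitaryGroup m ℂ) (μ : m → ℂ) :
    (conjStarAlgAut ℂ _ U (diagonal μ))ᴴ * conjStarAlgAut ℂ _ U (diagonal μ) =
      conjStarAlgAut ℂ _ U (diagonal fun i => ((‖μ i‖ ^ 2 : ℝ) : ℂ)) := by
  rw [← star_eq_conjTranspose, ← map_star, ← map_mul, star_eq_conjTranspose,
    diagonal_conjTranspose, diagonal_mul_diagonal]
  congr 2
  funext i
  rw [Complex.ofReal_pow]
  exact Complex.conj_mul' (μ i)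

end Matrix

theorem hermPart_conjStarAlgAut {n : ℕ} (U : unitaryGroup (Fin n) ℂ)
    (M : Matrix (Fin n) (Fin n) ℂ) :
    hermPart (conjStarAlgAut ℂ _ U M) = conjStarAlgAut ℂ _ U (hermPart M) := by
  simp only [hermPart, ← star_eq_conjTranspose, map_smul, map_add, map_star]

theorem hermPart_diagonal {n : ℕ} (v : Fin n → ℂ) :
    hermPart (diagonal v) = diagonal fun i => (((v i).re : ℝ) : ℂ) := by
  rw [hermPart, diagonal_conjTranspose, diagonal_add, ← diagonal_smul]
  congr 1
  funext i
  simp only [Pi.smul_apply, Pi.star_apply, RCLike.star_def, smul_eq_mul, Complex.re_eq_add_conj]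
  ring

theorem hermPart_inv_one_sub_conjStarAlgAut_diagonal {n : ℕ} (U : unitaryGroup (Fin n) ℂ)
    {μ : Fin n → ℂ} (hμ : ∀ i, μ i ≠ 1) :
    hermPart (1 - conjStarAlgAut ℂ _ U (diagonal μ))⁻¹ =
      conjStarAlgAut ℂ _ U (diagonal fun i => ((((1 - μ i)⁻¹).re : ℝ) : ℂ)) := by
  rw [← map_one (conjStarAlgAut ℂ _ U), ← map_sub, ← conjStarAlgAut_nonsing_inv,
    hermPart_conjStarAlgAut, ← diagonal_one, diagonal_sub,
    inv_diagonal_of_ne_zero fun i => sub_ne_zero.mpr (hμ i).symm, hermPart_diagonal]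
  rfl

theorem inv_one_add_oldSqrt {n : ℕ} {B : Matrix (Fin n) (Fin n) ℂ} (hB : B.PosSemidef) :
    (1 + PosSemidef.oldSqrt hB)⁻¹ = conjStarAlgAut ℂ _ hB.isHermitian.eigenvectorUnitary
      (diagonal fun k => (((1 + √(hB.isHermitian.eigenvalues k))⁻¹ : ℝ) : ℂ)) := by
  have hsqrt : PosSemidef.oldSqrt hB = conjStarAlgAut ℂ _ hB.isHermitian.eigenvectorUnitary
      (diagonal fun k => ((√(hB.isHermitian.eigenvalues k) : ℝ) : ℂ)) := rfl
  rw [hsqrt, ← map_one (conjStarAlgAut ℂ _ _), ← map_add, ← conjStarAlgAut_nonsing_inv,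
    ← diagonal_one, diagonal_add, inv_diagonal_of_ne_zero fun k => by positivity]
  push_cast
  rfl

theorem eigDesc_eq_comp_sort {n : ℕ} {B : Matrix (Fin n) (Fin n) ℂ} (hB : B.IsHermitian)
    {d : Fin n → ℝ} (h : Finset.univ.val.map hB.eigenvalues = Finset.univ.val.map d)
    (j : Fin n) : eigDesc hB j = (d ∘ Tuple.sort d) j.rev := by
  rw [eigDesc, Tuple.comp_sort_eq_of_map_univ_eq h]

-- `(1 - Re z)(1 + |z|) - |1 - z|² = (|z| + Re z)(1 - |z|) ≥ 0`
theorem Complex.inv_one_add_norm_le_re_inv_one_sub {z : ℂ} (hz : ‖z‖ < 1) :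
    (1 + ‖z‖)⁻¹ ≤ ((1 - z)⁻¹).re := by
  have hre : -‖z‖ ≤ z.re := (abs_le.mp (Complex.abs_re_le_norm z)).1
  have hnormSq : Complex.normSq (1 - z) = 1 - 2 * z.re + ‖z‖ ^ 2 := by
    rw [Complex.sq_norm, Complex.normSq_apply, Complex.normSq_apply]
    simp only [Complex.sub_re, Complex.one_re, Complex.sub_im, Complex.one_im]
    ring
  have hpos : 0 < Complex.normSq (1 - z) :=
    Complex.normSq_pos.mpr (sub_ne_zero.mpr fun h => by simp [← h] at hz)
  rw [Complex.inv_re, Complex.sub_re, Complex.one_re, inv_eq_one_div,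
    div_le_div_iff₀ (by positivity) hpos, hnormSq]
  nlinarith [mul_nonneg (neg_le_iff_add_nonneg.mp hre) (sub_nonneg.mpr hz.le)]

section NormalMatrix

variable {n : ℕ} {A : Matrix (Fin n) (Fin n) ℂ} {U : unitaryGroup (Fin n) ℂ} {μ : Fin n → ℂ}

theorem map_eigenvalues_conjTranspose_mul_self (hAU : A = conjStarAlgAut ℂ _ U (diagonal μ)) :
    Finset.univ.val.map (posSemidef_conjTranspose_mul_self A).isHermitian.eigenvalues =
      Finset.univ.val.map fun i => ‖μ i‖ ^ 2 :=
  (posSemidef_conjTranspose_mul_self A).isHermitian.map_eigenvalues_eq_of_eq_conj_diagonal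
    (by rw [hAU, conjTranspose_mul_self_conjStarAlgAut_diagonal]; rfl)

theorem exists_singVal_eq_norm (hAU : A = conjStarAlgAut ℂ _ U (diagonal μ)) (i : Fin n) :
    ∃ j, singVal A j = ‖μ i‖ := by
  refine ⟨((Tuple.sort fun i => ‖μ i‖ ^ 2).symm i).rev, ?_⟩
  rw [singVal, eigDesc_eq_comp_sort _ (map_eigenvalues_conjTranspose_mul_self hAU), Fin.rev_rev,
    Function.comp_apply, Equiv.apply_symm_apply, Real.sqrt_sq (norm_nonneg _)]

theorem eigDesc_inv_one_add_oldSqrt (hAU : A = conjStarAlgAut ℂ _ U (diagonal μ))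
    (hI : ((1 + PosSemidef.oldSqrt (posSemidef_conjTranspose_mul_self A))⁻¹).IsHermitian)
    (j : Fin n) :
    eigDesc hI j = ((fun i => (1 + ‖μ i‖)⁻¹) ∘ Tuple.sort fun i => (1 + ‖μ i‖)⁻¹) j.rev := by
  refine eigDesc_eq_comp_sort _
    ((hI.map_eigenvalues_eq_of_eq_conj_diagonal (inv_one_add_oldSqrt _)).trans ?_) j
  have h := congrArg (Multiset.map fun x => (1 + √x)⁻¹)
    (map_eigenvalues_conjTranspose_mul_self hAU)
  rw [Multiset.map_map, Multiset.map_map] at h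
  refine h.trans (Multiset.map_congr rfl fun i _ => ?_)
  rw [Function.comp_apply, Real.sqrt_sq (norm_nonneg _)]

theorem eigDesc_hermPart_inv_one_sub (hAU : A = conjStarAlgAut ℂ _ U (diagonal μ))
    (hμ : ∀ i, μ i ≠ 1) (j : Fin n) :
    eigDesc (hermPart_isHermitian (1 - A)⁻¹) j =
      ((fun i => ((1 - μ i)⁻¹).re) ∘ Tuple.sort fun i => ((1 - μ i)⁻¹).re) j.rev :=
  eigDesc_eq_comp_sort _ ((hermPart_isHermitian _).map_eigenvalues_eq_of_eq_conj_diagonal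
    (by rw [hAU, hermPart_inv_one_sub_conjStarAlgAut_diagonal U hμ]; rfl)) j

end NormalMatrix

theorem stmt15 {n : ℕ} (A : Matrix (Fin n) (Fin n) ℂ) (hN : Aᴴ * A = A * Aᴴ)
    (hA : ∀ j, singVal A j < 1)
    (hI : ((1 + PosSemidef.oldSqrt (Matrix.posSemidef_conjTranspose_mul_self A))⁻¹).IsHermitian)
    (j : Fin n) :
    eigDesc (hermPart_isHermitian (1 - A)⁻¹) j ≥ eigDesc hI j := by
  have : IsStarNormal A := ⟨hN⟩
  obtain ⟨U, μ, hAU⟩ := exists_unitary_diagonal_of_isStarNormal A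
  have hμ : ∀ i, ‖μ i‖ < 1 := fun i => by
    obtain ⟨k, hk⟩ := exists_singVal_eq_norm hAU i
    exact hk ▸ hA k
  rw [ge_iff_le, eigDesc_inv_one_add_oldSqrt hAU,
    eigDesc_hermPart_inv_one_sub hAU fun i h => (hμ i).ne (by rw [h, norm_one])]
  exact Tuple.comp_sort_le_comp_sort
    (fun i => Complex.inv_one_add_norm_le_re_inv_one_sub (hμ i)) j.rev
end

section
/- Let A be an n×n strict contraction with singular values σ_1(A) ≥ … ≥ σ_n(A), and let C(A) = (A−iI)(A+iI)⁻¹ be its Cayley transform. Then for each j = 1,…,n, (1−σ_{n−j+1}(A))/(1+σ_1(A)) ≤ σ_j(C(A)) ≤ (1+σ_j(A))/(1−σ_1(A)). -/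
open Matrix
open scoped ComplexOrder

/-!
Write `C(A) = N B⁻¹` with `N = A - iI` and `B = A + iI`. By the Courant–Fischer min-max
principle, `σ_j(XY) ≤ σ_j(X) ‖Y‖`, and a scalar shift moves singular values by at most the
modulus of the scalar: `σ_j(A + c) ≤ σ_j(A) + |c|` and `|c| - σ_{n-j+1}(A) ≤ σ_j(A + c)`.
For `c = ±i` the extreme case `j = 1` gives `(1 - σ_1(A)) ‖x‖ ≤ ‖Bx‖ ≤ (1 + σ_1(A)) ‖x‖`,
so `B` is invertible with `‖B⁻¹‖ ≤ 1 / (1 - σ_1(A))`. The upper bound is then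
`σ_j(N B⁻¹) ≤ σ_j(N) ‖B⁻¹‖`, and the lower bound is `σ_j(N) = σ_j(C(A) B) ≤ σ_j(C(A)) ‖B‖`.
-/

lemma LinearIndependent.finrank_span_image {ι K V : Type*} [Field K] [AddCommGroup V]
    [Module K V] {v : ι → V} (hv : LinearIndependent K v) (s : Finset ι) :
    Module.finrank K (Submodule.span K (v '' s)) = s.card := by
  rw [Set.image_eq_range]
  exact (finrank_span_eq_card (hv.comp _ Subtype.val_injective)).trans (by simp)

lemma OrthonormalBasis.inner_eq_zero_of_mem_span_image_s17 {ι 𝕜 E : Type*} [Fintype ι] [RCLike 𝕜]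
    [NormedAddCommGroup E] [InnerProductSpace 𝕜 E] (b : OrthonormalBasis ι 𝕜 E) {s : Set ι}
    {x : E} (hx : x ∈ Submodule.span 𝕜 (b '' s)) {j : ι} (hj : j ∉ s) : inner 𝕜 (b j) x = 0 := by
  rw [← b.coe_toBasis, Module.Basis.mem_span_image] at hx
  rw [← b.repr_apply_apply, ← b.coe_toBasis_repr_apply, ← Finsupp.notMem_support_iff]
  exact fun h => hj (hx h)

lemma Submodule.exists_mem_inf_ne_zero_of_finrank_lt {K V : Type*} [DivisionRing K]
    [AddCommGroup V] [Module K V] [FiniteDimensional K V] {s t : Submodule K V}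
    (h : Module.finrank K V < Module.finrank K s + Module.finrank K t) :
    ∃ x ∈ s ⊓ t, x ≠ 0 := by
  by_contra! h'
  exact h.not_ge <| Submodule.finrank_add_finrank_le_of_disjoint <|
    Submodule.disjoint_def.2 fun x hs ht => h' x ⟨hs, ht⟩

lemma Submodule.finrank_le_finrank_comap {K V : Type*} [DivisionRing K] [AddCommGroup V]
    [Module K V] [FiniteDimensional K V] (f : V →ₗ[K] V) (p : Submodule K V) :
    Module.finrank K p ≤ Module.finrank K (p.comap f) := by
  -- `p.comap f` is the kernel of `V → V ⧸ p`, whose range has dimension at most `dim V - dim p`.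
  have hrank := LinearMap.finrank_range_add_finrank_ker (p.mkQ ∘ₗ f)
  rw [LinearMap.ker_comp, Submodule.ker_mkQ] at hrank
  have hquot := p.finrank_quotient_add_finrank
  have hrange := Submodule.finrank_le (LinearMap.range (p.mkQ ∘ₗ f))
  omega

namespace Matrix

variable {n : ℕ}

local notation "𝐓" => toEuclideanCLM (n := Fin _) (𝕜 := ℂ)

lemma singVal_nonneg (Z : Matrix (Fin n) (Fin n) ℂ) (j : Fin n) : 0 ≤ singVal Z j :=
  Real.sqrt_nonneg _

lemma singVal_antitone (Z : Matrix (Fin n) (Fin n) ℂ) : Antitone (singVal Z) := fun _ _ hij =>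
  Real.sqrt_le_sqrt <| Tuple.monotone_sort _ (Fin.rev_le_rev.mpr hij)

lemma toEuclideanCLM_mul_apply (X Y : Matrix (Fin n) (Fin n) ℂ) (x : EuclideanSpace ℂ (Fin n)) :
    𝐓 (X * Y) x = 𝐓 X (𝐓 Y x) := by
  simp

lemma toEuclideanCLM_conjTranspose (Z : Matrix (Fin n) (Fin n) ℂ) :
    𝐓 Zᴴ = ContinuousLinearMap.adjoint (𝐓 Z) := by
  rw [← star_eq_conjTranspose, map_star, ContinuousLinearMap.star_eq_adjoint]

lemma inner_conjTranspose_mul_self_apply (Z : Matrix (Fin n) (Fin n) ℂ)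
    (x y : EuclideanSpace ℂ (Fin n)) :
    inner ℂ x (𝐓 (Zᴴ * Z) y) = inner ℂ (𝐓 Z x) (𝐓 Z y) := by
  rw [toEuclideanCLM_mul_apply, toEuclideanCLM_conjTranspose,
    ContinuousLinearMap.adjoint_inner_right]

/-- Reindexed so that the `j`-th eigenvector of `Zᴴ * Z` has eigenvalue `singVal Z j ^ 2`. -/
noncomputable def rightSingularBasis (Z : Matrix (Fin n) (Fin n) ℂ) :
    OrthonormalBasis (Fin n) ℂ (EuclideanSpace ℂ (Fin n)) :=
  (posSemidef_conjTranspose_mul_self Z).isHermitian.eigenvectorBasis.reindex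
    (Fin.revPerm.trans
      (Tuple.sort (posSemidef_conjTranspose_mul_self Z).isHermitian.eigenvalues)).symm

lemma conjTranspose_mul_self_apply_rightSingularBasis (Z : Matrix (Fin n) (Fin n) ℂ)
    (j : Fin n) :
    𝐓 (Zᴴ * Z) (rightSingularBasis Z j) = (singVal Z j ^ 2 : ℂ) • rightSingularBasis Z j := by
  have hZ := (posSemidef_conjTranspose_mul_self Z).isHermitian
  have hsq : singVal Z j ^ 2 = hZ.eigenvalues (Tuple.sort hZ.eigenvalues j.rev) :=
    Real.sq_sqrt ((posSemidef_conjTranspose_mul_self Z).eigenvalues_nonneg _)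
  ext1
  simp only [rightSingularBasis, OrthonormalBasis.reindex_apply, ofLp_toEuclideanCLM]
  rw [hZ.mulVec_eigenvectorBasis, Equiv.symm_symm, Equiv.trans_apply, Fin.revPerm_apply, ← hsq]
  simp [Complex.real_smul]

lemma norm_toEuclideanCLM_apply_sq (Z : Matrix (Fin n) (Fin n) ℂ)
    (x : EuclideanSpace ℂ (Fin n)) :
    ‖𝐓 Z x‖ ^ 2 = ∑ j, singVal Z j ^ 2 * ‖inner ℂ (rightSingularBasis Z j) x‖ ^ 2 := by
  set b := rightSingularBasis Z
  have hb (j : Fin n) :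
      inner ℂ (b j) (𝐓 (Zᴴ * Z) x) = (singVal Z j ^ 2 : ℂ) * inner ℂ (b j) x := by
    rw [inner_conjTranspose_mul_self_apply, ← inner_conj_symm,
      ← inner_conjTranspose_mul_self_apply, conjTranspose_mul_self_apply_rightSingularBasis,
      inner_smul_right, map_mul, inner_conj_symm]
    simp [b, ← Complex.ofReal_pow]
  rw [← inner_self_eq_norm_sq (𝕜 := ℂ), ← inner_conjTranspose_mul_self_apply,
    ← b.sum_inner_mul_inner, map_sum]
  refine Finset.sum_congr rfl fun j _ => ?_
  rw [hb, ← inner_conj_symm, mul_left_comm, Complex.conj_mul']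
  norm_cast

noncomputable def singularSpan (Z : Matrix (Fin n) (Fin n) ℂ) (s : Finset (Fin n)) :
    Submodule ℂ (EuclideanSpace ℂ (Fin n)) :=
  Submodule.span ℂ (rightSingularBasis Z '' s)

lemma finrank_singularSpan (Z : Matrix (Fin n) (Fin n) ℂ) (s : Finset (Fin n)) :
    Module.finrank ℂ (singularSpan Z s) = s.card :=
  (rightSingularBasis Z).orthonormal.linearIndependent.finrank_span_image s

lemma singularSpan_Ici_zero (Z : Matrix (Fin n) (Fin n) ℂ) (hn : 0 < n) :
    singularSpan Z (Finset.Ici ⟨0, hn⟩) = ⊤ :=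
  Submodule.eq_top_of_finrank_eq (by simp [finrank_singularSpan])

lemma norm_toEuclideanCLM_apply_le_of_mem_singularSpan_Ici (Z : Matrix (Fin n) (Fin n) ℂ)
    (m : Fin n) {x : EuclideanSpace ℂ (Fin n)} (hx : x ∈ singularSpan Z (Finset.Ici m)) :
    ‖𝐓 Z x‖ ≤ singVal Z m * ‖x‖ := by
  have hsq : ‖𝐓 Z x‖ ^ 2 ≤ (singVal Z m * ‖x‖) ^ 2 := by
    rw [norm_toEuclideanCLM_apply_sq, mul_pow,
      ← (rightSingularBasis Z).sum_sq_norm_inner_right, Finset.mul_sum]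
    refine Finset.sum_le_sum fun j _ => ?_
    by_cases hj : m ≤ j
    · gcongr
      exacts [singVal_nonneg Z j, singVal_antitone Z hj]
    · simp [(rightSingularBasis Z).inner_eq_zero_of_mem_span_image_s17 hx (by simpa using hj)]
  exact le_of_sq_le_sq hsq (mul_nonneg (singVal_nonneg Z m) (norm_nonneg x))

lemma singVal_mul_norm_le_of_mem_singularSpan_Iic (Z : Matrix (Fin n) (Fin n) ℂ) (m : Fin n)
    {x : EuclideanSpace ℂ (Fin n)} (hx : x ∈ singularSpan Z (Finset.Iic m)) :
    singVal Z m * ‖x‖ ≤ ‖𝐓 Z x‖ := by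
  have hsq : (singVal Z m * ‖x‖) ^ 2 ≤ ‖𝐓 Z x‖ ^ 2 := by
    rw [norm_toEuclideanCLM_apply_sq, mul_pow,
      ← (rightSingularBasis Z).sum_sq_norm_inner_right, Finset.mul_sum]
    refine Finset.sum_le_sum fun j _ => ?_
    by_cases hj : j ≤ m
    · gcongr
      exacts [singVal_nonneg Z m, singVal_antitone Z hj]
    · simp [(rightSingularBasis Z).inner_eq_zero_of_mem_span_image_s17 hx (by simpa using hj)]
  exact le_of_sq_le_sq hsq (norm_nonneg _)

lemma singVal_le_of_forall_mem (Z : Matrix (Fin n) (Fin n) ℂ) (m : Fin n)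
    (V : Submodule ℂ (EuclideanSpace ℂ (Fin n))) (hV : n < Module.finrank ℂ V + (m + 1))
    {c : ℝ} (h : ∀ x ∈ V, ‖𝐓 Z x‖ ≤ c * ‖x‖) : singVal Z m ≤ c := by
  obtain ⟨x, ⟨hxV, hxS⟩, hx0⟩ := Submodule.exists_mem_inf_ne_zero_of_finrank_lt
    (s := V) (t := singularSpan Z (Finset.Iic m))
    (by rwa [finrank_euclideanSpace_fin, finrank_singularSpan, Fin.card_Iic])
  exact le_of_mul_le_mul_right
    ((singVal_mul_norm_le_of_mem_singularSpan_Iic Z m hxS).trans (h x hxV)) (norm_pos_iff.2 hx0)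

lemma le_singVal_of_forall_mem (Z : Matrix (Fin n) (Fin n) ℂ) (m : Fin n)
    (V : Submodule ℂ (EuclideanSpace ℂ (Fin n))) (hV : m < Module.finrank ℂ V) {c : ℝ}
    (h : ∀ x ∈ V, c * ‖x‖ ≤ ‖𝐓 Z x‖) : c ≤ singVal Z m := by
  obtain ⟨x, ⟨hxV, hxS⟩, hx0⟩ := Submodule.exists_mem_inf_ne_zero_of_finrank_lt
    (s := V) (t := singularSpan Z (Finset.Ici m))
    (by rw [finrank_euclideanSpace_fin, finrank_singularSpan, Fin.card_Ici]; omega)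
  exact le_of_mul_le_mul_right
    ((h x hxV).trans (norm_toEuclideanCLM_apply_le_of_mem_singularSpan_Ici Z m hxS))
    (norm_pos_iff.2 hx0)

lemma singVal_mul_le (X Y : Matrix (Fin n) (Fin n) ℂ) (j : Fin n) :
    singVal (X * Y) j ≤ singVal X j * ‖𝐓 Y‖ := by
  refine singVal_le_of_forall_mem (X * Y) j
    ((singularSpan X (Finset.Ici j)).comap (𝐓 Y).toLinearMap) ?_ fun x hx => ?_
  · have := Submodule.finrank_le_finrank_comap (𝐓 Y).toLinearMap (singularSpan X (Finset.Ici j))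
    rw [finrank_singularSpan, Fin.card_Ici] at this
    omega
  · calc ‖𝐓 (X * Y) x‖ = ‖𝐓 X (𝐓 Y x)‖ := by rw [toEuclideanCLM_mul_apply]
      _ ≤ singVal X j * ‖𝐓 Y x‖ := norm_toEuclideanCLM_apply_le_of_mem_singularSpan_Ici X j hx
      _ ≤ singVal X j * (‖𝐓 Y‖ * ‖x‖) :=
        mul_le_mul_of_nonneg_left ((𝐓 Y).le_opNorm x) (singVal_nonneg X j)
      _ = singVal X j * ‖𝐓 Y‖ * ‖x‖ := by ring

section ScalarShift

variable (A : Matrix (Fin n) (Fin n) ℂ) (c : ℂ)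

lemma toEuclideanCLM_add_smul_one_apply (x : EuclideanSpace ℂ (Fin n)) :
    𝐓 (A + c • 1) x = 𝐓 A x + c • x := by
  simp

lemma norm_toEuclideanCLM_add_smul_one_apply_le (m : Fin n) {x : EuclideanSpace ℂ (Fin n)}
    (hx : x ∈ singularSpan A (Finset.Ici m)) :
    ‖𝐓 (A + c • 1) x‖ ≤ (singVal A m + ‖c‖) * ‖x‖ := by
  rw [toEuclideanCLM_add_smul_one_apply, add_mul, ← norm_smul]
  exact (norm_add_le _ _).trans
    (add_le_add_left (norm_toEuclideanCLM_apply_le_of_mem_singularSpan_Ici A m hx) _)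

lemma sub_singVal_mul_norm_le_norm_toEuclideanCLM_add_smul_one_apply (m : Fin n)
    {x : EuclideanSpace ℂ (Fin n)} (hx : x ∈ singularSpan A (Finset.Ici m)) :
    (‖c‖ - singVal A m) * ‖x‖ ≤ ‖𝐓 (A + c • 1) x‖ := by
  have hAx := norm_toEuclideanCLM_apply_le_of_mem_singularSpan_Ici A m hx
  have htri := norm_sub_norm_le (c • x) (-𝐓 A x)
  rw [norm_neg, sub_neg_eq_add, add_comm, norm_smul] at htri
  rw [toEuclideanCLM_add_smul_one_apply]
  linarith

lemma singVal_add_smul_one_le (j : Fin n) : singVal (A + c • 1) j ≤ singVal A j + ‖c‖ :=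
  singVal_le_of_forall_mem _ j (singularSpan A (Finset.Ici j))
    (by rw [finrank_singularSpan, Fin.card_Ici]; omega)
    fun _ hx => norm_toEuclideanCLM_add_smul_one_apply_le A c j hx

lemma norm_sub_singVal_rev_le_singVal_add_smul_one (j : Fin n) :
    ‖c‖ - singVal A j.rev ≤ singVal (A + c • 1) j :=
  le_singVal_of_forall_mem _ j (singularSpan A (Finset.Ici j.rev))
    (by rw [finrank_singularSpan, Fin.card_Ici, Fin.val_rev]; omega)
    fun _ hx => sub_singVal_mul_norm_le_norm_toEuclideanCLM_add_smul_one_apply A c j.rev hx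

lemma norm_toEuclideanCLM_add_smul_one_le (hn : 0 < n) :
    ‖𝐓 (A + c • 1)‖ ≤ singVal A ⟨0, hn⟩ + ‖c‖ :=
  (𝐓 (A + c • 1)).opNorm_le_bound (add_nonneg (singVal_nonneg A _) (norm_nonneg c)) fun _ =>
    norm_toEuclideanCLM_add_smul_one_apply_le A c _
      (singularSpan_Ici_zero A hn ▸ Submodule.mem_top)

lemma sub_singVal_zero_mul_norm_le_norm_toEuclideanCLM_add_smul_one_apply (hn : 0 < n)
    (x : EuclideanSpace ℂ (Fin n)) :
    (‖c‖ - singVal A ⟨0, hn⟩) * ‖x‖ ≤ ‖𝐓 (A + c • 1) x‖ :=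
  sub_singVal_mul_norm_le_norm_toEuclideanCLM_add_smul_one_apply A c _
    (singularSpan_Ici_zero A hn ▸ Submodule.mem_top)

variable {A c}

lemma isUnit_det_add_smul_one (hn : 0 < n) (hAc : singVal A ⟨0, hn⟩ < ‖c‖) :
    IsUnit (A + c • 1).det := by
  rw [isUnit_iff_ne_zero]
  intro hdet
  obtain ⟨v, hv0, hv⟩ := exists_mulVec_eq_zero_iff.2 hdet
  have hbound :=
    sub_singVal_zero_mul_norm_le_norm_toEuclideanCLM_add_smul_one_apply A c hn (WithLp.toLp 2 v)
  rw [toEuclideanCLM_toLp, hv, WithLp.toLp_zero, norm_zero] at hbound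
  have hv_pos : 0 < ‖WithLp.toLp 2 v‖ := norm_pos_iff.2 (by simpa using hv0)
  nlinarith

lemma norm_toEuclideanCLM_inv_add_smul_one_le (hn : 0 < n) (hAc : singVal A ⟨0, hn⟩ < ‖c‖) :
    ‖𝐓 (A + c • 1)⁻¹‖ ≤ (‖c‖ - singVal A ⟨0, hn⟩)⁻¹ := by
  have hδ : 0 < ‖c‖ - singVal A ⟨0, hn⟩ := sub_pos.2 hAc
  refine (𝐓 (A + c • 1)⁻¹).opNorm_le_bound (inv_nonneg.2 hδ.le) fun y => ?_
  have hy := sub_singVal_zero_mul_norm_le_norm_toEuclideanCLM_add_smul_one_apply A c hn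
    (𝐓 (A + c • 1)⁻¹ y)
  rw [← toEuclideanCLM_mul_apply, mul_nonsing_inv _ (isUnit_det_add_smul_one hn hAc), map_one,
    one_apply_eq_self] at hy
  rw [inv_mul_eq_div, le_div_iff₀ hδ]
  linarith

end ScalarShift

noncomputable def cayley (A : Matrix (Fin n) (Fin n) ℂ) : Matrix (Fin n) (Fin n) ℂ :=
  (A - Complex.I • 1) * (A + Complex.I • 1)⁻¹

section Cayley

variable {A : Matrix (Fin n) (Fin n) ℂ} (hn : 0 < n)

lemma singVal_cayley_le (hA : singVal A ⟨0, hn⟩ < 1) (j : Fin n) :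
    singVal (cayley A) j ≤ (1 + singVal A j) / (1 - singVal A ⟨0, hn⟩) := by
  have hN : singVal (A - Complex.I • 1) j ≤ 1 + singVal A j := by
    have := singVal_add_smul_one_le A (-Complex.I) j
    rwa [neg_smul, ← sub_eq_add_neg, norm_neg, Complex.norm_I, add_comm] at this
  have hBinv := norm_toEuclideanCLM_inv_add_smul_one_le (c := Complex.I) hn
    (by rwa [Complex.norm_I])
  rw [Complex.norm_I] at hBinv
  calc singVal (cayley A) j ≤ singVal (A - Complex.I • 1) j * ‖𝐓 (A + Complex.I • 1)⁻¹‖ :=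
        singVal_mul_le _ _ j
    _ ≤ (1 + singVal A j) * (1 - singVal A ⟨0, hn⟩)⁻¹ :=
        mul_le_mul hN hBinv (norm_nonneg _) (add_nonneg zero_le_one (singVal_nonneg A j))
    _ = (1 + singVal A j) / (1 - singVal A ⟨0, hn⟩) := (div_eq_mul_inv _ _).symm

lemma le_singVal_cayley (hA : singVal A ⟨0, hn⟩ < 1) (j : Fin n) :
    (1 - singVal A j.rev) / (1 + singVal A ⟨0, hn⟩) ≤ singVal (cayley A) j := by
  have hN : 1 - singVal A j.rev ≤ singVal (A - Complex.I • 1) j := by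
    have := norm_sub_singVal_rev_le_singVal_add_smul_one A (-Complex.I) j
    rwa [neg_smul, ← sub_eq_add_neg, norm_neg, Complex.norm_I] at this
  have hB := norm_toEuclideanCLM_add_smul_one_le A Complex.I hn
  rw [Complex.norm_I] at hB
  have hcayley : cayley A * (A + Complex.I • 1) = A - Complex.I • 1 := by
    rw [cayley, mul_assoc,
      nonsing_inv_mul _ (isUnit_det_add_smul_one (c := Complex.I) hn (by rwa [Complex.norm_I])),
      mul_one]
  rw [div_le_iff₀ (by linarith [singVal_nonneg A ⟨0, hn⟩])]
  calc 1 - singVal A j.rev ≤ singVal (A - Complex.I • 1) j := hN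
    _ ≤ singVal (cayley A) j * ‖𝐓 (A + Complex.I • 1)‖ := by
        simpa only [hcayley] using singVal_mul_le (cayley A) (A + Complex.I • 1) j
    _ ≤ singVal (cayley A) j * (1 + singVal A ⟨0, hn⟩) :=
        mul_le_mul_of_nonneg_left (by linarith) (singVal_nonneg _ j)

end Cayley

end Matrix

theorem stmt17 {n : ℕ} (A : Matrix (Fin n) (Fin n) ℂ) (hA : ∀ j, singVal A j < 1) (j : Fin n) :
    (1 - singVal A j.rev) / (1 + singVal A ⟨0, j.pos⟩) ≤
        singVal ((A - Complex.I • 1) * (A + Complex.I • 1)⁻¹) j ∧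
      singVal ((A - Complex.I • 1) * (A + Complex.I • 1)⁻¹) j ≤
        (1 + singVal A j) / (1 - singVal A ⟨0, j.pos⟩) :=
  ⟨Matrix.le_singVal_cayley j.pos (hA _) j, Matrix.singVal_cayley_le j.pos (hA _) j⟩
end
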